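/- arXiv:math/0001103 — 3 statements merged into one kernel-verified Lean document; each statement's English description precedes it below -/
import Mathlib

section
/- Let w₀' > 0 and suppose Q(t) < t³ for all t ∈ [0, w₀']. Let w be a profile solution with initial slope w₀' on (0, r⁎). If 0 < r₀ ≤ r⁎ and w(r) ≥ 0 for all r ∈ (0, r₀), then the principal-curvature function κ(r) = w(r)/(r·√(1 + w(r)²)) is strictly decreasing on (0, r₀). -/
open Real Set Filter MeasureTheory

/-- The cubic polynomial `Q(t) = t³ + 2c₀t² + (c₀² + λ)t − p/2`. -/
noncomputable def Qpoly (c₀ lam p t : ℝ) : ℝ :=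
  t ^ 3 + 2 * c₀ * t ^ 2 + (c₀ ^ 2 + lam) * t - p / 2

/-- The principal curvature `κ(r) = w(r)/(r·√(1 + w(r)²))`. -/
noncomputable def kappaFun (w : ℝ → ℝ) (r : ℝ) : ℝ :=
  w r / (r * Real.sqrt (1 + (w r) ^ 2))

/-- The interval `(0, r⁎)` (with possibly infinite right endpoint) as a subset of `ℝ`. -/
def profDom (rstar : EReal) : Set ℝ := {r : ℝ | 0 < r ∧ (r : EReal) < rstar}

/-- A profile solution with initial slope `w₀'` on the interval `(0, r⁎)`:
a `C²` function satisfying the profile ODE with `w(r) → 0` and `w'(r) → w₀'` as `r → 0⁺`. -/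
structure IsProfileSolution (c₀ lam p w₀' : ℝ) (rstar : EReal) (w : ℝ → ℝ) : Prop where
  pos : 0 < rstar
  smooth : ContDiffOn ℝ 2 w (profDom rstar)
  ode : ∀ r ∈ profDom rstar,
    deriv (deriv w) r =
      -(deriv w r) / r + 5 * w r * (deriv w r) ^ 2 / (2 * (1 + (w r) ^ 2))
        + w r * (1 + (w r) ^ 2) / r ^ 2
        + (r / 2) * (1 + (w r) ^ 2) ^ ((5 : ℝ) / 2) * Qpoly c₀ lam p (kappaFun w r)
  lim_w : Tendsto w (nhdsWithin 0 (Set.Ioi 0)) (nhds 0)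
  lim_w' : Tendsto (deriv w) (nhdsWithin 0 (Set.Ioi 0)) (nhds w₀')

/-- A maximal profile solution: a profile solution that admits no proper extension. -/
def IsMaximal (c₀ lam p w₀' : ℝ) (rstar : EReal) (w : ℝ → ℝ) : Prop :=
  IsProfileSolution c₀ lam p w₀' rstar w ∧
    ∀ (rstar' : EReal) (w' : ℝ → ℝ), IsProfileSolution c₀ lam p w₀' rstar' w' →
      Set.EqOn w w' (profDom rstar) → rstar' ≤ rstar

/-- `δ₊(w₀') = min{−Q(t) : 0 ≤ t ≤ w₀'}`. -/
noncomputable def deltaPlus (c₀ lam p w₀' : ℝ) : ℝ :=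
  sInf ((fun t => -Qpoly c₀ lam p t) '' Set.Icc 0 w₀')

/-- `μ(w₀') = max{−Q(t) : 0 ≤ t ≤ w₀'}`. -/
noncomputable def muQ (c₀ lam p w₀' : ℝ) : ℝ :=
  sSup ((fun t => -Qpoly c₀ lam p t) '' Set.Icc 0 w₀')

/-- `δ₋ = min{−Q(t) : t ≤ 0}`. -/
noncomputable def deltaMinus (c₀ lam p : ℝ) : ℝ :=
  sInf ((fun t => -Qpoly c₀ lam p t) '' Set.Iic 0)

/-- `ξ(w₀') = 1 − 64·w₀'³/(27·δ₊(w₀'))`. -/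
noncomputable def xiQ (c₀ lam p w₀' : ℝ) : ℝ :=
  1 - 64 * w₀' ^ 3 / (27 * deltaPlus c₀ lam p w₀')

/-- `r₀` is the first zero of `w`: `w > 0` on `(0, r₀)` and `w(r₀) = 0`. -/
def IsFirstZero (rstar : EReal) (w : ℝ → ℝ) (r₀ : ℝ) : Prop :=
  0 < r₀ ∧ (r₀ : EReal) < rstar ∧ (∀ r ∈ Set.Ioo 0 r₀, 0 < w r) ∧ w r₀ = 0

/-- `rM` is the first critical point of `w` in `(0, r₀)`. -/
def IsFirstCrit (w : ℝ → ℝ) (r₀ rM : ℝ) : Prop :=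
  rM ∈ Set.Ioo 0 r₀ ∧ deriv w rM = 0 ∧ ∀ r ∈ Set.Ioo 0 rM, deriv w r ≠ 0

/-- The filter of real numbers approaching the (possibly infinite) endpoint `r⁎` from the left. -/
noncomputable def leftLim (rstar : EReal) : Filter ℝ :=
  Filter.comap (fun r : ℝ => (r : EReal)) (nhdsWithin rstar (Set.Iio rstar))


section Aux

lemma profDom_open (rstar : EReal) : IsOpen (profDom rstar) := by
  have : profDom rstar = Set.Ioi (0:ℝ) ∩ (fun r : ℝ => (r : EReal)) ⁻¹' (Set.Iio rstar) := by
    ext r; simp [profDom, Set.mem_setOf_eq]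
  rw [this]
  exact isOpen_Ioi.inter (continuous_coe_real_ereal.isOpen_preimage _ isOpen_Iio)

lemma aux_div_nonneg {a b : ℝ} (ha : a ≤ 0) (hb : b ≤ 0) : 0 ≤ a / b := by
  have h := div_nonneg (neg_nonneg.2 ha) (neg_nonneg.2 hb)
  rwa [neg_div_neg_eq] at h

end Aux

set_option maxHeartbeats 1000000 in
/-- If `Q(t) < t³` on `[0, w₀']` and `w ≥ 0` on `(0, r₀)`, then the
principal curvature `κ` is strictly decreasing on `(0, r₀)`. -/
theorem stmt0 (c₀ lam p w₀' : ℝ) (hp : 0 < p) (hw₀ : 0 < w₀')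
    (hQ : ∀ t ∈ Set.Icc (0 : ℝ) w₀', Qpoly c₀ lam p t < t ^ 3)
    (rstar : EReal) (w : ℝ → ℝ)
    (hsol : IsProfileSolution c₀ lam p w₀' rstar w)
    (r₀ : ℝ) (hr₀ : 0 < r₀) (hr₀le : (r₀ : EReal) ≤ rstar)
    (hnonneg : ∀ r ∈ Set.Ioo (0 : ℝ) r₀, 0 ≤ w r) :
    StrictAntiOn (kappaFun w) (Set.Ioo 0 r₀) := by
  -- basic setup
  have hDsub : Set.Ioo (0:ℝ) r₀ ⊆ profDom rstar := by
    intro r hr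
    exact ⟨hr.1, lt_of_lt_of_le (by exact_mod_cast hr.2) hr₀le⟩
  have hopen : IsOpen (profDom rstar) := profDom_open rstar
  have hmem : ∀ r ∈ Set.Ioo (0:ℝ) r₀, profDom rstar ∈ nhds r :=
    fun r hr => hopen.mem_nhds (hDsub hr)
  have hw1 : DifferentiableOn ℝ w (profDom rstar) := hsol.smooth.differentiableOn (by norm_num)
  have hwd : ∀ r ∈ Set.Ioo (0:ℝ) r₀, HasDerivAt w (deriv w r) r := fun r hr =>
    ((hw1.differentiableAt (hmem r hr))).hasDerivAt
  have hw2 : ContDiffOn ℝ 1 (deriv w) (profDom rstar) :=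
    hsol.smooth.deriv_of_isOpen hopen (by norm_num)
  have hwd2 : ∀ r ∈ Set.Ioo (0:ℝ) r₀, HasDerivAt (deriv w) (deriv (deriv w) r) r := fun r hr =>
    ((hw2.differentiableOn one_ne_zero).differentiableAt (hmem r hr)).hasDerivAt
  have hsq : ∀ r : ℝ, (0:ℝ) < 1 + (w r)^2 := fun r => by positivity
  have hs_pos : ∀ r : ℝ, 0 < Real.sqrt (1 + (w r)^2) := fun r =>
    Real.sqrt_pos.2 (hsq r)
  have hs_sq : ∀ r : ℝ, (Real.sqrt (1 + (w r)^2))^2 = 1 + (w r)^2 := fun r =>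
    Real.sq_sqrt (hsq r).le
  -- the key auxiliary function F
  set F : ℝ → ℝ := fun r => r * deriv w r - w r * (1 + (w r)^2) with hFdef
  -- derivative of F, using the ODE
  have hFd : ∀ r ∈ Set.Ioo (0:ℝ) r₀, HasDerivAt F
      ((2*(1+(w r)^2)*(2*(w r)^2 - 1) * F r + 5 * w r * (F r)^2) / (2*(1+(w r)^2) * r)
        + (r^2/2) * (Real.sqrt (1+(w r)^2))^5
          * (2*c₀*(kappaFun w r)^2 + (c₀^2+lam)*(kappaFun w r) - p/2)) r := by
    intro r hr
    have hr0 : (0:ℝ) < r := hr.1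
    have hode := hsol.ode r (hDsub hr)
    have h1 : HasDerivAt (fun x => x * deriv w x) (1 * deriv w r + r * deriv (deriv w) r) r :=
      (hasDerivAt_id r).mul (hwd2 r hr)
    have h2 : HasDerivAt (fun x => w x * (1 + (w x)^2))
        (deriv w r * (1 + (w r)^2) + w r * (0 + 2 * (w r)^(2-1) * deriv w r)) r :=
      (hwd r hr).mul ((hasDerivAt_const r (1:ℝ)).add ((hwd r hr).pow 2))
    have h3 := (h1.sub h2 : HasDerivAt F _ r)
    refine h3.congr_deriv (Eq.symm ?_)
    rw [hode]
    simp only [Qpoly, kappaFun, hFdef]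
    have h52 : (1 + (w r)^2) ^ ((5:ℝ)/2) = (Real.sqrt (1 + (w r)^2))^5 := by
      rw [Real.sqrt_eq_rpow, ← Real.rpow_natCast ((1 + (w r)^2) ^ ((1:ℝ)/2)) 5,
        ← Real.rpow_mul (hsq r).le]
      norm_num
    rw [h52]
    have hs0 : 0 < Real.sqrt (1 + w r ^ 2) := hs_pos r
    have hs2 : (Real.sqrt (1 + w r ^ 2)) ^ 2 = 1 + w r ^ 2 := hs_sq r
    set s := Real.sqrt (1 + w r ^ 2) with hsdef
    rw [← hs2]
    field_simp
    linear_combination (4 * r * deriv w r * s^2 : ℝ) * hs2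
  -- derivative of kappa
  have hκd : ∀ r ∈ Set.Ioo (0:ℝ) r₀, HasDerivAt (kappaFun w)
      (F r / (r^2 * (Real.sqrt (1 + (w r)^2))^3)) r := by
    intro r hr
    have hr0 : (0:ℝ) < r := hr.1
    have hs0 : 0 < Real.sqrt (1 + w r ^ 2) := hs_pos r
    have hs2 : (Real.sqrt (1 + w r ^ 2)) ^ 2 = 1 + w r ^ 2 := hs_sq r
    have hin : HasDerivAt (fun x => 1 + (w x)^2) (0 + 2 * (w r)^(2-1) * deriv w r) r :=
      (hasDerivAt_const r (1:ℝ)).add ((hwd r hr).pow 2)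
    have hsd : HasDerivAt (fun x => Real.sqrt (1 + (w x)^2))
        ((0 + 2 * (w r)^(2-1) * deriv w r) / (2 * Real.sqrt (1 + (w r)^2))) r :=
      hin.sqrt (by positivity)
    have hd : HasDerivAt (fun x => x * Real.sqrt (1 + (w x)^2))
        (1 * Real.sqrt (1 + (w r)^2) + r * ((0 + 2 * (w r)^(2-1) * deriv w r)
          / (2 * Real.sqrt (1 + (w r)^2)))) r :=
      (hasDerivAt_id r).mul hsd
    have hne : r * Real.sqrt (1 + (w r)^2) ≠ 0 := by positivity
    have h := ((hwd r hr).div hd hne :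
      HasDerivAt (fun x => w x / (x * Real.sqrt (1 + (w x)^2))) _ r)
    have hfun : kappaFun w = fun x => w x / (x * Real.sqrt (1 + (w x)^2)) := rfl
    rw [hfun]
    refine h.congr_deriv (Eq.symm ?_)
    simp only [hFdef]
    set s := Real.sqrt (1 + w r ^ 2) with hsdef
    rw [← hs2]
    field_simp
    linear_combination (-2 * r * deriv w r : ℝ) * hs2
  -- limits as r → 0⁺
  have hFlim : Tendsto F (nhdsWithin 0 (Set.Ioi 0)) (nhds 0) := by
    have h0 : Tendsto (fun r : ℝ => r) (nhdsWithin 0 (Set.Ioi 0)) (nhds 0) :=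
      Filter.tendsto_id.mono_right nhdsWithin_le_nhds
    have h1 := h0.mul hsol.lim_w'
    have h2 := hsol.lim_w.mul ((tendsto_const_nhds (x := (1:ℝ))).add (hsol.lim_w.pow 2))
    have h3 := h1.sub h2
    norm_num at h3
    exact h3
  have hκlim : Tendsto (kappaFun w) (nhdsWithin 0 (Set.Ioi 0)) (nhds w₀') := by
    set wt : ℝ → ℝ := fun x => if 0 < x then w x else 0 with hwt
    have hwt_eq : ∀ x ∈ Set.Ioi (0:ℝ), wt x = w x := fun x hx => if_pos hx
    have hIoo : Set.Ioo (0:ℝ) r₀ ∈ nhdsWithin 0 (Set.Ioi 0) :=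
      Ioo_mem_nhdsGT_of_mem ⟨le_rfl, hr₀⟩
    have hdiff : DifferentiableOn ℝ wt (Set.Ioo 0 r₀) := by
      intro x hx
      have hx' : Set.Ioi (0:ℝ) ∈ nhds x := isOpen_Ioi.mem_nhds hx.1
      have heq : wt =ᶠ[nhds x] w := Filter.eventuallyEq_of_mem hx' hwt_eq
      exact ((hwd x hx).differentiableAt.congr_of_eventuallyEq heq).differentiableWithinAt
    have hcont : ContinuousWithinAt wt (Set.Ioo 0 r₀) 0 := by
      have h1 : Tendsto wt (nhdsWithin 0 (Set.Ioo 0 r₀)) (nhds 0) := by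
        apply (hsol.lim_w.mono_left (nhdsWithin_mono _ Set.Ioo_subset_Ioi_self)).congr'
        filter_upwards [self_mem_nhdsWithin] with x hx
        exact (hwt_eq x hx.1).symm
      have hwt0 : wt 0 = 0 := if_neg (lt_irrefl 0)
      rw [ContinuousWithinAt, hwt0]
      exact h1
    have hdlim : Tendsto (fun x => deriv wt x) (nhdsWithin 0 (Set.Ioi 0)) (nhds w₀') := by
      apply hsol.lim_w'.congr'
      filter_upwards [self_mem_nhdsWithin] with x hx
      exact (Filter.EventuallyEq.deriv_eq
        (Filter.eventuallyEq_of_mem (isOpen_Ioi.mem_nhds hx) hwt_eq)).symm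
    have hD : HasDerivWithinAt wt w₀' (Set.Ici 0) 0 :=
      hasDerivWithinAt_Ici_of_tendsto_deriv hdiff hcont hIoo hdlim
    have hslope : Tendsto (slope wt 0) (nhdsWithin 0 (Set.Ioi 0)) (nhds w₀') := by
      have h1 := hasDerivWithinAt_iff_tendsto_slope.1 hD
      rwa [Set.Ici_sdiff_left] at h1
    have hwr : Tendsto (fun r => w r / r) (nhdsWithin 0 (Set.Ioi 0)) (nhds w₀') := by
      apply hslope.congr'
      filter_upwards [self_mem_nhdsWithin] with x hx
      rw [slope_def_field, hwt_eq x hx, hwt]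
      norm_num
    have hsqlim : Tendsto (fun r => Real.sqrt (1 + (w r)^2)) (nhdsWithin 0 (Set.Ioi 0))
        (nhds 1) := by
      have h1 : Tendsto (fun r => 1 + (w r)^2) (nhdsWithin 0 (Set.Ioi 0)) (nhds (1 + 0^2)) :=
        (tendsto_const_nhds (x := (1:ℝ))).add (hsol.lim_w.pow 2)
      have h2 := (Real.continuous_sqrt.continuousAt (x := (1:ℝ) + 0^2)).tendsto.comp h1
      norm_num at h2
      exact h2
    have h3 := hwr.div hsqlim one_ne_zero
    rw [div_one] at h3
    apply h3.congr
    intro x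
    show w x / x / Real.sqrt (1 + (w x)^2) = kappaFun w x
    rw [div_div]
    rfl
  -- an ε of room for the negativity of Q(t) - t³
  obtain ⟨ε, hε, hqneg⟩ : ∃ ε > 0, ∀ t ∈ Set.Icc (0:ℝ) (w₀' + ε),
      2*c₀*t^2 + (c₀^2+lam)*t - p/2 < 0 := by
    have hcont : Continuous (fun t : ℝ => 2*c₀*t^2 + (c₀^2+lam)*t - p/2) :=
      ((continuous_const.mul (continuous_pow 2)).add
        (continuous_const.mul continuous_id)).sub continuous_const
    have hopen' : IsOpen {t : ℝ | 2*c₀*t^2 + (c₀^2+lam)*t - p/2 < 0} :=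
      isOpen_lt hcont continuous_const
    have hw₀mem : w₀' ∈ {t : ℝ | 2*c₀*t^2 + (c₀^2+lam)*t - p/2 < 0} := by
      have h1 := hQ w₀' ⟨hw₀.le, le_rfl⟩
      simp only [Qpoly] at h1
      simp only [Set.mem_setOf_eq]
      linarith
    obtain ⟨ε, hε, hball⟩ := Metric.isOpen_iff.1 hopen' w₀' hw₀mem
    refine ⟨ε/2, half_pos hε, ?_⟩
    intro t ht
    rcases le_or_gt t w₀' with h|h
    · have h1 := hQ t ⟨ht.1, h⟩
      simp only [Qpoly] at h1
      linarith
    · have : t ∈ Metric.ball w₀' ε := by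
        rw [Metric.mem_ball, Real.dist_eq, abs_of_pos (by linarith)]
        have := ht.2
        linarith
      exact hball this
  -- choose δ
  obtain ⟨δ, hδ0, hδr₀, hδ⟩ : ∃ δ, 0 < δ ∧ δ ≤ r₀ ∧ ∀ r ∈ Set.Ioo (0:ℝ) δ,
      kappaFun w r < w₀' + ε ∧ |w r| < 1/10 ∧ |F r| < 1 := by
    have h1 : ∀ᶠ r in nhdsWithin 0 (Set.Ioi 0), kappaFun w r < w₀' + ε :=
      hκlim.eventually_lt_const (by linarith)
    have h2 : ∀ᶠ r in nhdsWithin 0 (Set.Ioi 0), |w r| < 1/10 := by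
      have := Metric.tendsto_nhds.mp hsol.lim_w (1/10) (by norm_num)
      filter_upwards [this] with x hx
      rwa [Real.dist_eq, sub_zero] at hx
    have h3 : ∀ᶠ r in nhdsWithin 0 (Set.Ioi 0), |F r| < 1 := by
      have := Metric.tendsto_nhds.mp hFlim 1 (by norm_num)
      filter_upwards [this] with x hx
      rwa [Real.dist_eq, sub_zero] at hx
    have h4 := (h1.and h2).and h3
    obtain ⟨u, hu, hsub⟩ := mem_nhdsGT_iff_exists_Ioo_subset.1 h4
    refine ⟨min u r₀, lt_min hu hr₀, min_le_right _ _, ?_⟩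
    intro r hr
    have : r ∈ Set.Ioo (0:ℝ) u := ⟨hr.1, lt_of_lt_of_le hr.2 (min_le_left _ _)⟩
    obtain ⟨⟨ha, hb⟩, hc⟩ := hsub this
    exact ⟨ha, hb, hc⟩
  -- κ is nonnegative on (0, r₀)
  have hκnn : ∀ r ∈ Set.Ioo (0:ℝ) r₀, 0 ≤ kappaFun w r := by
    intro r hr
    have : kappaFun w r = w r / (r * Real.sqrt (1 + (w r)^2)) := rfl
    rw [this]
    exact div_nonneg (hnonneg r hr) (mul_nonneg hr.1.le (hs_pos r).le)
  -- F' is negative wherever F ≥ 0 and r < δ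
  have hkey : ∀ r ∈ Set.Ioo (0:ℝ) δ, 0 ≤ F r →
      (2*(1+(w r)^2)*(2*(w r)^2 - 1) * F r + 5 * w r * (F r)^2) / (2*(1+(w r)^2) * r)
        + (r^2/2) * (Real.sqrt (1+(w r)^2))^5
          * (2*c₀*(kappaFun w r)^2 + (c₀^2+lam)*(kappaFun w r) - p/2) < 0 := by
    intro r hr hF
    have hrr₀ : r ∈ Set.Ioo (0:ℝ) r₀ := ⟨hr.1, lt_of_lt_of_le hr.2 hδr₀⟩
    obtain ⟨hκε, hwsm, hFsm⟩ := hδ r hr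
    have hw1' := abs_lt.1 hwsm
    have hF1' := abs_lt.1 hFsm
    have hbr : 2*(1+(w r)^2)*(2*(w r)^2 - 1) + 5 * w r * F r < 0 := by
      nlinarith [mul_pos (by linarith : (0:ℝ) < 1/10 - w r) (by linarith : (0:ℝ) < 1/10 + w r),
        mul_nonneg hF (by linarith : (0:ℝ) ≤ 1/10 - w r), sq_nonneg (w r)]
    have hmul := mul_nonpos_of_nonneg_of_nonpos hF hbr.le
    have hnum : 2*(1+(w r)^2)*(2*(w r)^2 - 1) * F r + 5 * w r * (F r)^2 ≤ 0 := by nlinarith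
    have hfirst : (2*(1+(w r)^2)*(2*(w r)^2 - 1) * F r + 5 * w r * (F r)^2)
        / (2*(1+(w r)^2) * r) ≤ 0 :=
      div_nonpos_of_nonpos_of_nonneg hnum
        (mul_nonneg (mul_nonneg (by norm_num : (0:ℝ) ≤ 2) (hsq r).le) hr.1.le)
    have hq := hqneg (kappaFun w r) ⟨hκnn r hrr₀, hκε.le⟩
    have hsecond : (r^2/2) * (Real.sqrt (1+(w r)^2))^5
        * (2*c₀*(kappaFun w r)^2 + (c₀^2+lam)*(kappaFun w r) - p/2) < 0 :=
      mul_neg_of_pos_of_neg (mul_pos (div_pos (pow_pos hr.1 2) two_pos)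
        (pow_pos (hs_pos r) 5)) hq
    linarith
  -- main claim on (0, δ)
  have claim1 : ∀ ρ ∈ Set.Ioo (0:ℝ) δ, F ρ < 0 := by
    by_contra hcon
    push_neg at hcon
    obtain ⟨ρ, hρ, hFρ⟩ := hcon
    set S : Set ℝ := {x | x ∈ Set.Ioc 0 ρ ∧ ∀ y ∈ Set.Icc x ρ, 0 ≤ F y} with hS
    have hρS : ρ ∈ S := ⟨⟨hρ.1, le_rfl⟩, fun y hy => by
      rw [le_antisymm hy.2 hy.1]; exact hFρ⟩
    have hbdd : BddBelow S := ⟨0, fun x hx => hx.1.1.le⟩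
    have hmub : sInf S ≤ ρ := csInf_le hbdd hρS
    have hm0 : 0 ≤ sInf S := le_csInf ⟨ρ, hρS⟩ (fun x hx => hx.1.1.le)
    have hFy : ∀ y, sInf S < y → y ≤ ρ → 0 ≤ F y := by
      intro y hy1 hy2
      obtain ⟨x, hxS, hxy⟩ := exists_lt_of_csInf_lt ⟨ρ, hρS⟩ hy1
      exact hxS.2 y ⟨hxy.le, hy2⟩
    rcases eq_or_lt_of_le hm0 with hm0' | hm0'
    · -- sInf S = 0 : F ≥ 0 on (0, ρ], F strictly decreasing there, contradiction
      have hFnn : ∀ y ∈ Set.Ioc (0:ℝ) ρ, 0 ≤ F y := fun y hy => hFy y (hm0' ▸ hy.1) hy.2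
      have hsubδ : Set.Ioc (0:ℝ) ρ ⊆ Set.Ioo 0 δ := fun x hx => ⟨hx.1, lt_of_le_of_lt hx.2 hρ.2⟩
      have hsubr₀ : Set.Ioc (0:ℝ) ρ ⊆ Set.Ioo 0 r₀ := fun x hx =>
        ⟨hx.1, lt_of_lt_of_le (hsubδ hx).2 hδr₀⟩
      have hanti : StrictAntiOn F (Set.Ioc 0 ρ) := by
        apply strictAntiOn_of_deriv_neg (convex_Ioc _ _)
        · exact fun x hx => (hFd x (hsubr₀ hx)).continuousAt.continuousWithinAt
        · intro x hx
          rw [interior_Ioc] at hx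
          have hx' : x ∈ Set.Ioc (0:ℝ) ρ := ⟨hx.1, hx.2.le⟩
          rw [(hFd x (hsubr₀ hx')).deriv]
          exact hkey x (hsubδ hx') (hFnn x hx')
      have h2ρ : ρ/2 ∈ Set.Ioc (0:ℝ) ρ := ⟨half_pos hρ.1, (half_le_self hρ.1.le)⟩
      have hle : F (ρ/2) ≤ 0 := by
        apply ge_of_tendsto hFlim
        filter_upwards [Ioo_mem_nhdsGT_of_mem ⟨le_rfl, half_pos hρ.1⟩] with x hx
        exact (hanti ⟨hx.1, le_trans hx.2.le h2ρ.2⟩ h2ρ hx.2).le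
      have hlt : F ρ < F (ρ/2) := hanti h2ρ ⟨hρ.1, le_rfl⟩ (half_lt_self hρ.1)
      exact absurd (lt_of_lt_of_le hlt hle) (not_lt.2 hFρ)
    · -- 0 < sInf S
      have hmδ : sInf S ∈ Set.Ioo (0:ℝ) δ := ⟨hm0', lt_of_le_of_lt hmub hρ.2⟩
      have hmr₀ : sInf S ∈ Set.Ioo (0:ℝ) r₀ := ⟨hm0', lt_of_lt_of_le hmδ.2 hδr₀⟩
      have hFm : 0 ≤ F (sInf S) := by
        rcases eq_or_lt_of_le hmub with h | h
        · rw [h]; exact hFρ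
        · apply ge_of_tendsto ((hFd _ hmr₀).continuousAt.continuousWithinAt
            (s := Set.Ioi (sInf S)))
          filter_upwards [Ioo_mem_nhdsGT_of_mem ⟨le_rfl, h⟩] with x hx
          exact hFy x hx.1 hx.2.le
      have hGm := hkey _ hmδ hFm
      have hslope := (hasDerivAt_iff_tendsto_slope.1 (hFd _ hmr₀)).eventually_lt_const hGm
      have hev' : ∀ᶠ x in nhdsWithin (sInf S) (Set.Iio (sInf S)), slope F (sInf S) x < 0 :=
        hslope.filter_mono (nhdsWithin_mono _ (fun x hx => by
          simpa using (ne_of_lt hx : x ≠ sInf S)))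
      obtain ⟨a, ha, hsub⟩ := mem_nhdsLT_iff_exists_Ioo_subset.1 hev'
      have hat : max a (sInf S/2) < sInf S := max_lt ha (half_lt_self hm0')
      set t := (max a (sInf S/2) + sInf S)/2 with htdef
      have hta : a < t := by
        have h1 := le_max_left a (sInf S/2)
        rw [htdef]; linarith
      have htm : t < sInf S := by rw [htdef]; linarith
      have ht0 : 0 < t := by
        have h1 := le_max_right a (sInf S/2)
        rw [htdef]; linarith
      have hFt : 0 < F t := by
        have hst : slope F (sInf S) t < 0 := hsub ⟨hta, htm⟩
        rw [slope_def_field] at hst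
        by_contra hc
        push_neg at hc
        have h1 : 0 ≤ (F t - F (sInf S))/(t - (sInf S)) :=
          aux_div_nonneg (by linarith) (by linarith)
        exact absurd hst (not_lt.2 h1)
      have htS : t ∈ S := by
        refine ⟨⟨ht0, le_trans htm.le hmub⟩, ?_⟩
        intro y hy
        rcases lt_or_ge y (sInf S) with hym | hym
        · have hyIoo : y ∈ Set.Ioo a (sInf S) := ⟨lt_of_lt_of_le hta hy.1, hym⟩
          have hsl : slope F (sInf S) y < 0 := hsub hyIoo
          rw [slope_def_field] at hsl
          by_contra hc
          push_neg at hc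
          have h1 : 0 ≤ (F y - F (sInf S))/(y - (sInf S)) :=
            aux_div_nonneg (by linarith) (by linarith)
          exact absurd hsl (not_lt.2 h1)
        · rcases eq_or_lt_of_le hym with h|h
          · rw [← h]; exact hFm
          · exact hFy y h hy.2
      have := csInf_le hbdd htS
      linarith
  -- main claim on (0, r₀)
  have claim2 : ∀ ρ ∈ Set.Ioo (0:ℝ) r₀, F ρ < 0 := by
    by_contra hcon
    push_neg at hcon
    obtain ⟨ρ, hρ, hFρ⟩ := hcon
    set T : Set ℝ := {x | x ∈ Set.Ioc 0 ρ ∧ 0 ≤ F x} with hT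
    have hρT : ρ ∈ T := ⟨⟨hρ.1, le_rfl⟩, hFρ⟩
    have hbdd : BddBelow T := ⟨0, fun x hx => hx.1.1.le⟩
    have hmρ : sInf T ≤ ρ := csInf_le hbdd hρT
    have hδm : δ ≤ sInf T := by
      apply le_csInf ⟨ρ, hρT⟩
      intro x hx
      by_contra h
      push_neg at h
      exact absurd hx.2 (not_le.2 (claim1 x ⟨hx.1.1, h⟩))
    have hm0 : 0 < sInf T := lt_of_lt_of_le hδ0 hδm
    have hmr₀ : sInf T ∈ Set.Ioo (0:ℝ) r₀ := ⟨hm0, lt_of_le_of_lt hmρ hρ.2⟩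
    have hFneg : ∀ x ∈ Set.Ioo (0:ℝ) (sInf T), F x < 0 := by
      intro x hx
      rcases lt_or_ge x δ with h | h
      · exact claim1 x ⟨hx.1, h⟩
      · by_contra hc
        push_neg at hc
        have hxT : x ∈ T := ⟨⟨hx.1, le_trans hx.2.le hmρ⟩, hc⟩
        exact absurd (csInf_le hbdd hxT) (not_le.2 hx.2)
    have hFm_ge : 0 ≤ F (sInf T) := by
      have hglb : IsGLB T (sInf T) := isGLB_csInf ⟨ρ, hρT⟩ hbdd
      have hcl : sInf T ∈ closure T := hglb.mem_closure ⟨ρ, hρT⟩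
      haveI hne : (nhdsWithin (sInf T) T).NeBot := mem_closure_iff_nhdsWithin_neBot.1 hcl
      apply ge_of_tendsto ((hFd _ hmr₀).continuousAt.continuousWithinAt (s := T))
      filter_upwards [self_mem_nhdsWithin] with x hx using hx.2
    have hFm_le : F (sInf T) ≤ 0 := by
      have hcl : sInf T ∈ closure (Set.Ioo 0 (sInf T)) := by
        rw [closure_Ioo (ne_of_lt hm0)]
        exact ⟨hm0.le, le_rfl⟩
      haveI hne : (nhdsWithin (sInf T) (Set.Ioo 0 (sInf T))).NeBot :=
        mem_closure_iff_nhdsWithin_neBot.1 hcl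
      apply le_of_tendsto ((hFd _ hmr₀).continuousAt.continuousWithinAt
        (s := Set.Ioo 0 (sInf T)))
      filter_upwards [self_mem_nhdsWithin] with x hx using (hFneg x hx).le
    have hFm : F (sInf T) = 0 := le_antisymm hFm_le hFm_ge
    -- κ (sInf T) ≤ w₀'
    have hκm_le : kappaFun w (sInf T) ≤ w₀' := by
      have hsubr₀ : Set.Ioc (0:ℝ) (sInf T) ⊆ Set.Ioo 0 r₀ := fun x hx =>
        ⟨hx.1, lt_of_le_of_lt hx.2 hmr₀.2⟩
      have hanti : StrictAntiOn (kappaFun w) (Set.Ioc 0 (sInf T)) := by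
        apply strictAntiOn_of_deriv_neg (convex_Ioc _ _)
        · exact fun x hx => (hκd x (hsubr₀ hx)).continuousAt.continuousWithinAt
        · intro x hx
          rw [interior_Ioc] at hx
          rw [(hκd x (hsubr₀ ⟨hx.1, hx.2.le⟩)).deriv]
          exact div_neg_of_neg_of_pos (hFneg x hx)
            (mul_pos (pow_pos hx.1 2) (pow_pos (hs_pos x) 3))
      have hhalf : sInf T / 2 ∈ Set.Ioc (0:ℝ) (sInf T) := ⟨half_pos hm0, half_le_self hm0.le⟩
      have h2 : kappaFun w (sInf T / 2) ≤ w₀' := by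
        apply ge_of_tendsto hκlim
        filter_upwards [Ioo_mem_nhdsGT_of_mem ⟨le_rfl, half_pos hm0⟩] with x hx
        exact (hanti ⟨hx.1, le_trans hx.2.le hhalf.2⟩ hhalf hx.2).le
      have h3 : kappaFun w (sInf T) < kappaFun w (sInf T / 2) :=
        hanti hhalf ⟨hm0, le_rfl⟩ (half_lt_self hm0)
      linarith
    -- F'(sInf T) < 0
    have hGm : (2*(1+(w (sInf T))^2)*(2*(w (sInf T))^2 - 1) * F (sInf T)
          + 5 * w (sInf T) * (F (sInf T))^2) / (2*(1+(w (sInf T))^2) * (sInf T))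
        + ((sInf T)^2/2) * (Real.sqrt (1+(w (sInf T))^2))^5
          * (2*c₀*(kappaFun w (sInf T))^2 + (c₀^2+lam)*(kappaFun w (sInf T)) - p/2) < 0 := by
      have hq := hqneg (kappaFun w (sInf T)) ⟨hκnn _ hmr₀, by linarith⟩
      have hsecond : ((sInf T)^2/2) * (Real.sqrt (1+(w (sInf T))^2))^5
          * (2*c₀*(kappaFun w (sInf T))^2 + (c₀^2+lam)*(kappaFun w (sInf T)) - p/2) < 0 :=
        mul_neg_of_pos_of_neg (mul_pos (div_pos (pow_pos hm0 2) two_pos)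
          (pow_pos (hs_pos _) 5)) hq
      rw [hFm]
      have hzero : (2*(1+(w (sInf T))^2)*(2*(w (sInf T))^2 - 1) * 0
          + 5 * w (sInf T) * (0:ℝ)^2) / (2*(1+(w (sInf T))^2) * (sInf T)) = 0 := by
        norm_num
      rw [hzero]
      linarith
    have hslope := (hasDerivAt_iff_tendsto_slope.1 (hFd _ hmr₀)).eventually_lt_const hGm
    have hev' : ∀ᶠ x in nhdsWithin (sInf T) (Set.Iio (sInf T)), slope F (sInf T) x < 0 :=
      hslope.filter_mono (nhdsWithin_mono _ (fun x hx => by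
        simpa using (ne_of_lt hx : x ≠ sInf T)))
    obtain ⟨a, ha, hsub⟩ := mem_nhdsLT_iff_exists_Ioo_subset.1 hev'
    have hat : max a (sInf T/2) < sInf T := max_lt ha (half_lt_self hm0)
    set t := (max a (sInf T/2) + sInf T)/2 with htdef
    have hta : a < t := by
      have h1 := le_max_left a (sInf T/2)
      rw [htdef]; linarith
    have htm : t < sInf T := by rw [htdef]; linarith
    have ht0 : 0 < t := by
      have h1 := le_max_right a (sInf T/2)
      rw [htdef]; linarith
    have hst : slope F (sInf T) t < 0 := hsub ⟨hta, htm⟩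
    rw [slope_def_field] at hst
    have hFt : 0 < F t := by
      by_contra hc
      push_neg at hc
      have h1 : 0 ≤ (F t - F (sInf T))/(t - (sInf T)) :=
        aux_div_nonneg (by linarith [hFm_ge]) (by linarith)
      exact absurd hst (not_lt.2 h1)
    exact absurd (hFneg t ⟨ht0, htm⟩) (not_lt.2 hFt.le)
  -- conclude
  have hκcont : ContinuousOn (kappaFun w) (Set.Ioo 0 r₀) := fun x hx =>
    ((hκd x hx).continuousAt).continuousWithinAt
  refine strictAntiOn_of_deriv_neg (convex_Ioo _ _) hκcont ?_
  intro x hx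
  rw [interior_Ioo] at hx
  rw [(hκd x hx).deriv]
  exact div_neg_of_neg_of_pos (claim2 x hx) (mul_pos (pow_pos hx.1 2) (pow_pos (hs_pos x) 3))
end

section
/- Suppose every real root of Q is positive, w₀' > 0, Q(t) < 0 for all t ∈ [0, w₀'], and in addition 64·w₀'³ < 27·δ₊(w₀'). Let w be a profile solution with initial slope w₀' and let r₀ be its first zero. Then ∫₀^{r₀} w(r) dr ≤ (4·w₀'²/δ₊(w₀'))·(1 − 64·w₀'³/(27·δ₊(w₀')))^{−1/2}. -/
open Real Set Filter MeasureTheory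

/-! Auxiliary lemmas -/

lemma continuous_Qpoly (c₀ lam p : ℝ) : Continuous (Qpoly c₀ lam p) := by
  unfold Qpoly; continuity

-- the auxiliary function u
noncomputable def uFun (w : ℝ → ℝ) (t : ℝ) : ℝ :=
  t ^ 2 * deriv w t / (Real.sqrt (1 + w t ^ 2)) ^ 3 - t * w t / Real.sqrt (1 + w t ^ 2)

-- the second principal curvature
noncomputable def yFun (w : ℝ → ℝ) (t : ℝ) : ℝ :=
  deriv w t / (Real.sqrt (1 + w t ^ 2)) ^ 3

lemma hasDerivAt_kappa (w : ℝ → ℝ) (r b : ℝ) (hr : 0 < r)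
    (hw : HasDerivAt w b r) (hb : b = deriv w r) :
    HasDerivAt (kappaFun w) ((yFun w r - kappaFun w r) / r) r := by
  subst hb
  set a := w r with ha
  have hs : (0:ℝ) < 1 + a ^ 2 := by positivity
  set q := Real.sqrt (1 + a ^ 2) with hqdef
  have hq0 : 0 < q := Real.sqrt_pos.mpr hs
  have hq2 : q ^ 2 = 1 + a ^ 2 := Real.sq_sqrt hs.le
  have hS : HasDerivAt (fun t => 1 + w t ^ 2) (2 * a * (deriv w r)) r := by
    simpa using ((hw.pow 2).const_add 1)
  have hQ : HasDerivAt (fun t => Real.sqrt (1 + w t ^ 2)) (2 * a * (deriv w r) / (2 * q)) r :=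
    hS.sqrt (by positivity)
  have hden : HasDerivAt (fun t => t * Real.sqrt (1 + w t ^ 2))
      (1 * q + r * (2 * a * (deriv w r) / (2 * q))) r := (hasDerivAt_id r).mul hQ
  have h := hw.div hden (by positivity)
  have hfun : kappaFun w = fun t => w t / (t * Real.sqrt (1 + w t ^ 2)) := rfl
  rw [hfun]
  refine h.congr_deriv ?_; symm
  show _ = _
  simp only [kappaFun, yFun]
  field_simp
  linear_combination (-(deriv w r) * r * Real.sqrt (1 + w r ^ 2)) * hq2

lemma hasDerivAt_u (c₀ lam p : ℝ) (w : ℝ → ℝ) (r m : ℝ) (hr : 0 < r)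
    (hw : HasDerivAt w (deriv w r) r)
    (hw2 : HasDerivAt (deriv w) m r)
    (hode : m =
      -(deriv w r) / r + 5 * w r * (deriv w r) ^ 2 / (2 * (1 + (w r) ^ 2))
        + w r * (1 + (w r) ^ 2) / r ^ 2
        + (r / 2) * (1 + (w r) ^ 2) ^ ((5 : ℝ) / 2) * Qpoly c₀ lam p (kappaFun w r)) :
    HasDerivAt (uFun w)
      (r ^ 3 / 2 * (1 + w r ^ 2) *
        (Qpoly c₀ lam p (kappaFun w r) - kappaFun w r * (yFun w r) ^ 2)) r := by
  set a := w r with ha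
  set b := deriv w r with hb
  have hs : (0:ℝ) < 1 + a ^ 2 := by positivity
  set q := Real.sqrt (1 + a ^ 2) with hqdef
  have hq0 : 0 < q := Real.sqrt_pos.mpr hs
  have hq2 : q ^ 2 = 1 + a ^ 2 := Real.sq_sqrt hs.le
  have hrpow : (1 + a ^ 2) ^ ((5:ℝ)/2) = q ^ 5 := by
    rw [show ((5:ℝ)/2) = ((1:ℝ)/2) * (5:ℕ) by norm_num, Real.rpow_mul hs.le,
      ← Real.sqrt_eq_rpow, Real.rpow_natCast]
  have hS : HasDerivAt (fun t => 1 + w t ^ 2) (2 * a * b) r := by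
    simpa using ((hw.pow 2).const_add 1)
  have hQ : HasDerivAt (fun t => Real.sqrt (1 + w t ^ 2)) (2 * a * b / (2 * q)) r :=
    hS.sqrt (by positivity)
  have hQ3 : HasDerivAt (fun t => (Real.sqrt (1 + w t ^ 2)) ^ 3)
      (3 * q ^ 2 * (2 * a * b / (2 * q))) r := by
    simpa using hQ.fun_pow 3
  have hnum1 : HasDerivAt (fun t => t ^ 2 * deriv w t) (2 * r ^ 1 * b + r ^ 2 * m) r :=
    (hasDerivAt_pow 2 r).mul hw2
  have hnum2 : HasDerivAt (fun t => t * w t) (1 * a + r * b) r := (hasDerivAt_id r).mul hw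
  have h1 := hnum1.div hQ3 (by positivity)
  have h2 := hnum2.div hQ (by positivity)
  have h := h1.sub h2
  have hfun : uFun w = fun t => t ^ 2 * deriv w t / (Real.sqrt (1 + w t ^ 2)) ^ 3
      - t * w t / Real.sqrt (1 + w t ^ 2) := rfl
  rw [hfun]
  refine h.congr_deriv ?_; symm
  simp only [kappaFun, yFun, ← ha, ← hb, ← hqdef] at hode ⊢
  rw [hode, hrpow]
  field_simp
  ring_nf
  linear_combination (-r^3*a^2*q^7*(Qpoly c₀ lam p (a * r⁻¹ * q⁻¹)) - r^3*q^7*(Qpoly c₀ lam p (a * r⁻¹ * q⁻¹))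
    + 2*r*a^2*b*q^4 + 2*r*b*q^4 + 2*a*q^4 + 2*a^3*q^4 - 5*r^2*a*b^2*q^2 + r^2*a*b^2 + r^2*a^3*b^2) * hq2

lemma uFun_eq (w : ℝ → ℝ) (t : ℝ) (ht : t ≠ 0) :
    uFun w t = t ^ 2 * (yFun w t - kappaFun w t) := by
  have hs : (0:ℝ) < 1 + w t ^ 2 := by positivity
  have hq0 : 0 < Real.sqrt (1 + w t ^ 2) := Real.sqrt_pos.mpr hs
  rw [uFun, yFun, kappaFun]
  field_simp

set_option maxHeartbeats 2000000 in
theorem stmt3' (c₀ lam p w₀' : ℝ) (hp : 0 < p)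
    (hw₀ : 0 < w₀')
    (hQneg : ∀ t ∈ Set.Icc (0 : ℝ) w₀', Qpoly c₀ lam p t < 0)
    (hxi : 64 * w₀' ^ 3 < 27 * deltaPlus c₀ lam p w₀')
    (rstar : EReal) (w : ℝ → ℝ)
    (hsol : IsProfileSolution c₀ lam p w₀' rstar w)
    (r₀ : ℝ) (hr₀ : IsFirstZero rstar w r₀) :
    ∫ r in (0 : ℝ)..r₀, w r ≤
      (4 * w₀' ^ 2 / deltaPlus c₀ lam p w₀') *
        (1 - 64 * w₀' ^ 3 / (27 * deltaPlus c₀ lam p w₀')) ^ (-(1 : ℝ) / 2) := by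
  obtain ⟨hr₀pos, hr₀lt, hwpos, hwr₀⟩ := hr₀
  set δ := deltaPlus c₀ lam p w₀' with hδdef
  set U := profDom rstar with hUdef
  set l := nhdsWithin (0:ℝ) (Set.Ioi 0) with hldef
  -- δ facts
  have hKcomp : IsCompact ((fun t => -Qpoly c₀ lam p t) '' Icc (0:ℝ) w₀') :=
    isCompact_Icc.image (continuous_Qpoly c₀ lam p).neg
  have hKne : ((fun t => -Qpoly c₀ lam p t) '' Icc (0:ℝ) w₀').Nonempty :=
    (nonempty_Icc.mpr hw₀.le).image _
  have hδmem : ∃ t₀ ∈ Icc (0:ℝ) w₀', δ = -Qpoly c₀ lam p t₀ := by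
    have := hKcomp.sInf_mem hKne
    obtain ⟨t₀, ht₀, h⟩ := this
    exact ⟨t₀, ht₀, h.symm⟩
  have hδpos : 0 < δ := by
    obtain ⟨t₀, ht₀, h⟩ := hδmem
    rw [h]
    linarith [hQneg t₀ ht₀]
  have hQle : ∀ t ∈ Icc (0:ℝ) w₀', Qpoly c₀ lam p t ≤ -δ := by
    intro t ht
    have : δ ≤ -Qpoly c₀ lam p t := csInf_le hKcomp.bddBelow (mem_image_of_mem _ ht)
    linarith
  -- extension of negativity beyond w₀'
  obtain ⟨ε, hεpos, hQε⟩ : ∃ ε > 0, ∀ t ∈ Icc (0:ℝ) (w₀' + ε), Qpoly c₀ lam p t < 0 := by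
    have hcont := (continuous_Qpoly c₀ lam p).continuousAt (x := w₀')
    have hQw₀ : Qpoly c₀ lam p w₀' < 0 := hQneg w₀' (right_mem_Icc.mpr hw₀.le)
    have : ∀ᶠ t in nhds w₀', Qpoly c₀ lam p t < 0 :=
      hcont.eventually_lt continuousAt_const hQw₀
    obtain ⟨ε, hε, hball⟩ := Metric.eventually_nhds_iff.mp this
    refine ⟨ε/2, by positivity, fun t ht => ?_⟩
    rcases le_or_gt t w₀' with h | h
    · exact hQneg t ⟨ht.1, h⟩
    · refine hball ?_
      rw [Real.dist_eq, abs_of_pos (by linarith)]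
      have := ht.2
      linarith
  -- domain facts
  have hUopen : IsOpen U := by
    have : U = Ioi (0:ℝ) ∩ (fun r : ℝ => (r : EReal)) ⁻¹' (Iio rstar) := by
      ext r; simp [hUdef, profDom, mem_Ioi]
    rw [this]
    exact isOpen_Ioi.inter (isOpen_Iio.preimage continuous_coe_real_ereal)
  have hIocU : Ioc 0 r₀ ⊆ U := by
    intro r hr
    refine ⟨hr.1, lt_of_le_of_lt ?_ hr₀lt⟩
    exact_mod_cast EReal.coe_le_coe_iff.mpr hr.2
  -- derivatives
  have hdw : ∀ r ∈ U, HasDerivAt w (deriv w r) r := by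
    intro r hr
    have hdOn : DifferentiableOn ℝ w U := hsol.smooth.differentiableOn (by norm_num)
    exact ((hdOn r hr).differentiableAt (hUopen.mem_nhds hr)).hasDerivAt
  have hdw2 : ∀ r ∈ U, HasDerivAt (deriv w) (deriv (deriv w) r) r := by
    intro r hr
    have hC1 : ContDiffOn ℝ 1 (deriv w) U :=
      hsol.smooth.deriv_of_isOpen hUopen (by norm_num)
    have hdOn : DifferentiableOn ℝ (deriv w) U := hC1.differentiableOn (by norm_num)
    exact ((hdOn r hr).differentiableAt (hUopen.mem_nhds hr)).hasDerivAt
  -- HasDerivAt for u and kappa on Ioc 0 r₀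
  have hud : ∀ r ∈ Ioc 0 r₀, HasDerivAt (uFun w)
      (r ^ 3 / 2 * (1 + w r ^ 2) *
        (Qpoly c₀ lam p (kappaFun w r) - kappaFun w r * (yFun w r) ^ 2)) r := by
    intro r hr
    exact hasDerivAt_u c₀ lam p w r _ hr.1 (hdw r (hIocU hr)) (hdw2 r (hIocU hr))
      (hsol.ode r (hIocU hr))
  have hkd : ∀ r ∈ Ioc 0 r₀, HasDerivAt (kappaFun w) ((yFun w r - kappaFun w r) / r) r := by
    intro r hr
    exact hasDerivAt_kappa w r _ hr.1 (hdw r (hIocU hr)) rfl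
  have hucont : ContinuousOn (uFun w) (Ioc 0 r₀) :=
    fun r hr => ((hud r hr).continuousAt).continuousWithinAt
  have hkcont : ContinuousOn (kappaFun w) (Ioc 0 r₀) :=
    fun r hr => ((hkd r hr).continuousAt).continuousWithinAt
  -- limits at 0⁺
  have hr0l : Tendsto (fun r : ℝ => r) l (nhds 0) :=
    (continuous_id.tendsto 0).mono_left nhdsWithin_le_nhds
  have hq1 : Tendsto (fun r => Real.sqrt (1 + w r ^ 2)) l (nhds 1) := by
    have h1 : Tendsto (fun r => 1 + w r ^ 2) l (nhds 1) := by
      simpa using tendsto_const_nhds.add (hsol.lim_w.pow 2)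
    simpa using h1.sqrt
  have hy0 : Tendsto (yFun w) l (nhds w₀') := by
    have hfun : yFun w = fun t => deriv w t / (Real.sqrt (1 + w t ^ 2)) ^ 3 := rfl
    rw [hfun]
    simpa [Pi.div_def] using hsol.lim_w'.div (hq1.pow 3) (by norm_num)
  have hwr : Tendsto (fun r => w r / r) l (nhds w₀') := by
    rw [Metric.tendsto_nhdsWithin_nhds]
    intro ε hε
    obtain ⟨δ₁, hδ₁, hd1⟩ := Metric.tendsto_nhdsWithin_nhds.mp hsol.lim_w' (ε/2) (by positivity)
    refine ⟨min δ₁ r₀, by positivity, ?_⟩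
    intro x hx hxd
    have hx0 : 0 < x := hx
    rw [Real.dist_eq, sub_zero, abs_of_pos hx0] at hxd
    have hxδ₁ : x < δ₁ := lt_of_lt_of_le hxd (min_le_left _ _)
    have hxr₀ : x < r₀ := lt_of_lt_of_le hxd (min_le_right _ _)
    set g : ℝ → ℝ := fun t => w t - w₀' * t with hgdef
    have hder : ∀ t ∈ Ioc 0 x, HasDerivWithinAt g ((fun t => deriv w t - w₀') t) (Ioc 0 x) t := by
      intro t ht
      have h1 : HasDerivAt g (deriv w t - w₀') t := by
        simpa using (hdw t (hIocU ⟨ht.1, le_trans ht.2 hxr₀.le⟩)).fun_sub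
          ((hasDerivAt_id t).const_mul w₀')
      exact h1.hasDerivWithinAt
    have hbdd : ∀ t ∈ Ioc 0 x, ‖(fun t => deriv w t - w₀') t‖ ≤ ε/2 := by
      intro t ht
      have := hd1 (mem_Ioi.mpr ht.1) (by
        rw [Real.dist_eq, sub_zero, abs_of_pos ht.1]; exact lt_of_le_of_lt ht.2 hxδ₁)
      rw [Real.dist_eq] at this
      exact le_of_lt this
    have hkey : ∀ s ∈ Ioc 0 x, ‖g x - g s‖ ≤ ε/2 * x := by
      intro s hs
      have := Convex.norm_image_sub_le_of_norm_hasDerivWithin_le hder hbdd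
        (convex_Ioc 0 x) hs (right_mem_Ioc.mpr hx0)
      refine le_trans this ?_
      have : ‖x - s‖ ≤ x := by
        rw [Real.norm_eq_abs, abs_of_nonneg (by linarith [hs.2])]
        linarith [hs.1]
      nlinarith [hε.le]
    have hglim : Tendsto (fun s => ‖g x - g s‖) l (nhds ‖g x - 0‖) := by
      have hg0 : Tendsto g l (nhds 0) := by
        simpa [hgdef] using hsol.lim_w.sub (hr0l.const_mul w₀')
      exact (tendsto_const_nhds.sub hg0).norm
    have hgx : ‖g x - 0‖ ≤ ε/2 * x := by
      refine le_of_tendsto hglim ?_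
      filter_upwards [Ioo_mem_nhdsGT_of_mem (Set.mem_Ico.mpr ⟨le_refl 0, hx0⟩)] with s hs
      exact hkey s ⟨hs.1, hs.2.le⟩
    rw [sub_zero, Real.norm_eq_abs] at hgx
    rw [Real.dist_eq, show w x / x - w₀' = (w x - w₀' * x) / x by field_simp,
      abs_div, abs_of_pos hx0, div_lt_iff₀ hx0]
    calc |w x - w₀' * x| ≤ ε/2 * x := hgx
      _ < ε * x := by nlinarith
  have hx0 : Tendsto (kappaFun w) l (nhds w₀') := by
    have hfun : kappaFun w = fun r => (w r / r) / Real.sqrt (1 + w r ^ 2) := by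
      funext r; rw [kappaFun, div_div]
    rw [hfun]
    simpa [Pi.div_def] using hwr.div hq1 (by norm_num)
  have hu0 : Tendsto (uFun w) l (nhds 0) := by
    have hfun : uFun w = fun t => t ^ 2 * deriv w t / (Real.sqrt (1 + w t ^ 2)) ^ 3
        - t * w t / Real.sqrt (1 + w t ^ 2) := rfl
    rw [hfun]
    have h1 : Tendsto (fun t => t ^ 2 * deriv w t / (Real.sqrt (1 + w t ^ 2)) ^ 3) l (nhds 0) := by
      simpa [Pi.div_def] using ((hr0l.pow 2).mul hsol.lim_w').div (hq1.pow 3) (by norm_num)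
    have h2 : Tendsto (fun t => t * w t / Real.sqrt (1 + w t ^ 2)) l (nhds 0) := by
      simpa [Pi.div_def] using (hr0l.mul hsol.lim_w).div hq1 (by norm_num)
    simpa using h1.sub h2
  -- positivity of kappa
  have hxpos : ∀ r ∈ Ioo 0 r₀, 0 < kappaFun w r := by
    intro r hr
    rw [kappaFun]
    have h := hwpos r hr
    have : (0:ℝ) < r * Real.sqrt (1 + w r ^ 2) := by
      have : (0:ℝ) < Real.sqrt (1 + w r ^ 2) := Real.sqrt_pos.mpr (by positivity)
      nlinarith [hr.1]
    exact div_pos h this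
  -- main decreasing argument, packaged:
  -- if kappa ≤ B on Ioc 0 ρ with Q < 0 on range, then u < 0 on Ioc 0 ρ and kappa strictly decr.
  have key : ∀ ρ, 0 < ρ → ρ < r₀ →
      (∀ s ∈ Ioc 0 ρ, kappaFun w s ≤ w₀' + ε) →
      (∀ s ∈ Ioc 0 ρ, uFun w s < 0) ∧ StrictAntiOn (kappaFun w) (Ioc 0 ρ) := by
    intro ρ hρ0 hρr₀ hbd
    have hsub : Ioc 0 ρ ⊆ Ioc 0 r₀ := Ioc_subset_Ioc_right hρr₀.le
    have hu'neg : ∀ s ∈ Ioc 0 ρ,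
        s ^ 3 / 2 * (1 + w s ^ 2) *
          (Qpoly c₀ lam p (kappaFun w s) - kappaFun w s * (yFun w s) ^ 2) < 0 := by
      intro s hs
      have hκ0 : 0 ≤ kappaFun w s :=
        (hxpos s ⟨hs.1, lt_of_le_of_lt hs.2 hρr₀⟩).le
      have hQs : Qpoly c₀ lam p (kappaFun w s) < 0 := hQε _ ⟨hκ0, hbd s hs⟩
      have h2 : Qpoly c₀ lam p (kappaFun w s) - kappaFun w s * (yFun w s) ^ 2 < 0 := by
        nlinarith [mul_nonneg hκ0 (sq_nonneg (yFun w s))]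
      have h1 : (0:ℝ) < s ^ 3 / 2 * (1 + w s ^ 2) :=
        mul_pos (div_pos (pow_pos hs.1 3) two_pos) (by positivity)
      exact mul_neg_of_pos_of_neg h1 h2
    have huanti : StrictAntiOn (uFun w) (Ioc 0 ρ) := by
      apply strictAntiOn_of_deriv_neg (convex_Ioc 0 ρ) (hucont.mono hsub)
      intro s hs
      rw [interior_Ioc] at hs
      rw [(hud s (hsub (Ioo_subset_Ioc_self hs))).deriv]
      exact hu'neg s (Ioo_subset_Ioc_self hs)
    have huneg : ∀ s ∈ Ioc 0 ρ, uFun w s < 0 := by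
      intro s hs
      have h2 : s/2 ∈ Ioc 0 ρ := ⟨by linarith [hs.1], by linarith [hs.1, hs.2]⟩
      have hlt : uFun w s < uFun w (s/2) := huanti h2 hs (by linarith [hs.1])
      have hle : uFun w (s/2) ≤ 0 := by
        refine ge_of_tendsto hu0 ?_
        filter_upwards [Ioo_mem_nhdsGT_of_mem (mem_Ico.mpr ⟨le_refl (0:ℝ), half_pos hs.1⟩)]
          with t ht
        exact (huanti ⟨ht.1, by linarith [ht.2, hs.1, hs.2]⟩ h2 ht.2).le
      linarith
    refine ⟨huneg, ?_⟩
    apply strictAntiOn_of_deriv_neg (convex_Ioc 0 ρ) (hkcont.mono hsub)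
    intro s hs
    rw [interior_Ioc] at hs
    have hsI : s ∈ Ioc 0 ρ := Ioo_subset_Ioc_self hs
    rw [(hkd s (hsub hsI)).deriv]
    have hu := huneg s hsI
    have hue := uFun_eq w s (ne_of_gt hs.1)
    have hs2 : (0:ℝ) < s ^ 2 := pow_pos hs.1 2
    have hyx : yFun w s - kappaFun w s < 0 := by nlinarith
    exact div_neg_of_neg_of_pos hyx hs.1
  -- Claim A
  have hA : ∀ r ∈ Ioo 0 r₀, kappaFun w r ≤ w₀' := by
    by_contra hcon
    push_neg at hcon
    obtain ⟨r₂, hr₂, hx2⟩ := hcon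
    set c := min (w₀' + ε) ((w₀' + kappaFun w r₂)/2) with hcdef
    have hc1 : w₀' < c := lt_min (by linarith) (by linarith)
    have hc2 : c ≤ w₀' + ε := min_le_left _ _
    have hc3 : c < kappaFun w r₂ := lt_of_le_of_lt (min_le_right _ _) (by linarith)
    have hev : {r | kappaFun w r < c} ∈ l := hx0 (Iio_mem_nhds hc1)
    obtain ⟨a', ha', hsuba⟩ := mem_nhdsGT_iff_exists_Ioc_subset.mp hev
    set a := min a' (r₂/2) with hadef
    have ha0 : 0 < a := lt_min ha' (by linarith [hr₂.1])
    have haR : a < r₂ := lt_of_le_of_lt (min_le_right _ _) (by linarith [hr₂.1])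
    have hIocsub : ∀ s ∈ Ioc 0 a, kappaFun w s < c := fun s hs =>
      hsuba ⟨hs.1, le_trans hs.2 (min_le_left _ _)⟩
    have hIccsub : Icc a r₂ ⊆ Ioc 0 r₀ := fun s hs =>
      ⟨lt_of_lt_of_le ha0 hs.1, le_trans hs.2 hr₂.2.le⟩
    set K := Icc a r₂ ∩ kappaFun w ⁻¹' Ici c with hKdef
    have hKclosed : IsClosed K :=
      ContinuousOn.preimage_isClosed_of_isClosed (hkcont.mono hIccsub) isClosed_Icc isClosed_Ici
    have hKcompact : IsCompact K :=
      isCompact_Icc.of_isClosed_subset hKclosed inter_subset_left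
    have hKnon : K.Nonempty := ⟨r₂, ⟨haR.le, le_refl r₂⟩, hc3.le⟩
    set r₁ := sInf K with hr₁def
    have hr₁K : r₁ ∈ K := hKcompact.sInf_mem hKnon
    have hr₁a : a ≤ r₁ := hr₁K.1.1
    have hr₁r₂ : r₁ ≤ r₂ := hr₁K.1.2
    have hr₁pos : 0 < r₁ := lt_of_lt_of_le ha0 hr₁a
    have hcr₁ : c ≤ kappaFun w r₁ := hr₁K.2
    have hlt : ∀ s ∈ Ioo 0 r₁, kappaFun w s < c := by
      intro s hs
      rcases le_or_gt s a with h | h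
      · exact hIocsub s ⟨hs.1, h⟩
      · by_contra hge
        push_neg at hge
        have hsK : s ∈ K := ⟨⟨h.le, le_trans hs.2.le hr₁r₂⟩, hge⟩
        have := csInf_le hKcompact.bddBelow hsK
        rw [← hr₁def] at this
        linarith [hs.2]
    have hbd : ∀ s ∈ Ioc 0 r₁, kappaFun w s ≤ w₀' + ε := by
      intro s hs
      rcases lt_or_eq_of_le hs.2 with h | h
      · exact le_trans (hlt s ⟨hs.1, h⟩).le hc2
      · have hsr : s ∈ Ioc 0 r₀ := ⟨hs.1, by rw [h]; exact le_trans hr₁r₂ hr₂.2.le⟩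
        have hcont : ContinuousAt (kappaFun w) s := (hkd s hsr).continuousAt
        have htd : Tendsto (kappaFun w) (nhdsWithin s (Iio s)) (nhds (kappaFun w s)) :=
          hcont.tendsto.mono_left nhdsWithin_le_nhds
        have : kappaFun w s ≤ c := by
          refine le_of_tendsto htd ?_
          filter_upwards [Ioo_mem_nhdsLT_of_mem (mem_Ioc.mpr ⟨hs.1, le_refl s⟩)] with t ht
          refine (hlt t ?_).le
          rw [← h]
          exact ht
        linarith
    obtain ⟨huneg, hkanti⟩ := key r₁ hr₁pos (lt_of_le_of_lt hr₁r₂ hr₂.2) hbd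
    have h1 : kappaFun w r₁ < kappaFun w (r₁/2) :=
      hkanti ⟨half_pos hr₁pos, by linarith⟩ ⟨hr₁pos, le_refl r₁⟩ (by linarith)
    have h2 : kappaFun w (r₁/2) ≤ w₀' := by
      refine ge_of_tendsto hx0 ?_
      filter_upwards [Ioo_mem_nhdsGT_of_mem (mem_Ico.mpr ⟨le_refl (0:ℝ), half_pos hr₁pos⟩)]
        with t ht
      exact (hkanti ⟨ht.1, by linarith [ht.2]⟩ ⟨half_pos hr₁pos, by linarith⟩ ht.2).le
    linarith
  -- quantitative decay
  have hxbound : ∀ r ∈ Ioo 0 r₀, kappaFun w r ≤ w₀' - δ * r ^ 2 / 16 := by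
    -- the function v = u + (δ/8) r⁴ is nonincreasing with limit 0
    set vF := fun t => uFun w t + δ/8 * t ^ 4 with hvFdef
    have hvd : ∀ r ∈ Ioo 0 r₀, HasDerivAt vF
        (r ^ 3 / 2 * (1 + w r ^ 2) *
          (Qpoly c₀ lam p (kappaFun w r) - kappaFun w r * (yFun w r) ^ 2) + δ/8 * (4 * r ^ 3)) r := by
      intro r hr
      have h2 : HasDerivAt (fun t : ℝ => δ/8 * t ^ 4) (δ/8 * (↑4 * r ^ (4-1))) r :=
        (hasDerivAt_pow 4 r).const_mul (δ/8)
      exact (hud r (Ioo_subset_Ioc_self hr)).add (by norm_num at h2 ⊢; exact h2)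
    have hQκ : ∀ r ∈ Ioo 0 r₀, Qpoly c₀ lam p (kappaFun w r) ≤ -δ := fun r hr =>
      hQle _ ⟨(hxpos r hr).le, hA r hr⟩
    have hv'le : ∀ r ∈ Ioo 0 r₀,
        r ^ 3 / 2 * (1 + w r ^ 2) *
          (Qpoly c₀ lam p (kappaFun w r) - kappaFun w r * (yFun w r) ^ 2) + δ/8 * (4 * r ^ 3) ≤ 0 := by
      intro r hr
      have ht : Qpoly c₀ lam p (kappaFun w r) - kappaFun w r * (yFun w r) ^ 2 ≤ -δ := by
        nlinarith [mul_nonneg (hxpos r hr).le (sq_nonneg (yFun w r)), hQκ r hr]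
      have hwt : w r ^ 2 * (Qpoly c₀ lam p (kappaFun w r) - kappaFun w r * (yFun w r) ^ 2) ≤ 0 :=
        mul_nonpos_of_nonneg_of_nonpos (sq_nonneg _) (by linarith)
      have heq : r ^ 3 / 2 * (1 + w r ^ 2) *
          (Qpoly c₀ lam p (kappaFun w r) - kappaFun w r * (yFun w r) ^ 2) + δ/8 * (4 * r ^ 3)
          = r ^ 3 / 2 * ((Qpoly c₀ lam p (kappaFun w r) - kappaFun w r * (yFun w r) ^ 2)
            + w r ^ 2 * (Qpoly c₀ lam p (kappaFun w r) - kappaFun w r * (yFun w r) ^ 2) + δ) := by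
        ring
      rw [heq]
      apply mul_nonpos_of_nonneg_of_nonpos
        (le_of_lt (div_pos (pow_pos hr.1 3) two_pos))
      linarith
    have hvanti : AntitoneOn vF (Ioo 0 r₀) := by
      apply antitoneOn_of_deriv_nonpos (convex_Ioo 0 r₀)
      · exact fun r hr => ((hvd r hr).continuousAt).continuousWithinAt
      · intro r hr
        rw [interior_Ioo] at hr
        exact (hvd r hr).differentiableAt.differentiableWithinAt
      · intro r hr
        rw [interior_Ioo] at hr
        show deriv vF r ≤ 0
        rw [(hvd r hr).deriv]
        exact hv'le r hr
    have hv0 : Tendsto vF l (nhds 0) := by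
      have h2 : Tendsto (fun t : ℝ => δ/8 * t ^ 4) l (nhds 0) := by
        simpa using (hr0l.pow 4).const_mul (δ/8)
      simpa using hu0.add h2
    have hvle : ∀ r ∈ Ioo 0 r₀, vF r ≤ 0 := by
      intro r hr
      refine ge_of_tendsto hv0 ?_
      filter_upwards [Ioo_mem_nhdsGT_of_mem (mem_Ico.mpr ⟨le_refl (0:ℝ), hr.1⟩)] with t ht
      exact hvanti ⟨ht.1, lt_trans ht.2 hr.2⟩ hr ht.2.le
    -- the function φ = κ + (δ/16) r² is nonincreasing with limit w₀'
    set φF := fun t => kappaFun w t + δ/16 * t ^ 2 with hφFdef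
    have hφd : ∀ r ∈ Ioo 0 r₀, HasDerivAt φF
        ((yFun w r - kappaFun w r) / r + δ/16 * (2 * r)) r := by
      intro r hr
      have h2 : HasDerivAt (fun t : ℝ => δ/16 * t ^ 2) (δ/16 * (↑2 * r ^ (2-1))) r :=
        (hasDerivAt_pow 2 r).const_mul (δ/16)
      exact (hkd r (Ioo_subset_Ioc_self hr)).add (by norm_num at h2 ⊢; exact h2)
    have hφ'le : ∀ r ∈ Ioo 0 r₀, (yFun w r - kappaFun w r) / r + δ/16 * (2 * r) ≤ 0 := by
      intro r hr
      have he : (yFun w r - kappaFun w r) / r + δ/16 * (2 * r)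
          = (uFun w r + δ/8 * r ^ 4) / r ^ 3 := by
        have hr' : r ≠ 0 := ne_of_gt hr.1
        rw [uFun_eq w r hr']
        field_simp
        ring
      rw [he]
      exact div_nonpos_of_nonpos_of_nonneg (hvle r hr) (le_of_lt (pow_pos hr.1 3))
    have hφanti : AntitoneOn φF (Ioo 0 r₀) := by
      apply antitoneOn_of_deriv_nonpos (convex_Ioo 0 r₀)
      · exact fun r hr => ((hφd r hr).continuousAt).continuousWithinAt
      · intro r hr
        rw [interior_Ioo] at hr
        exact (hφd r hr).differentiableAt.differentiableWithinAt
      · intro r hr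
        rw [interior_Ioo] at hr
        show deriv φF r ≤ 0
        rw [(hφd r hr).deriv]
        exact hφ'le r hr
    have hφ0 : Tendsto φF l (nhds w₀') := by
      have h2 : Tendsto (fun t : ℝ => δ/16 * t ^ 2) l (nhds 0) := by
        simpa using (hr0l.pow 2).const_mul (δ/16)
      simpa using hx0.add h2
    intro r hr
    have hφle : φF r ≤ w₀' := by
      refine ge_of_tendsto hφ0 ?_
      filter_upwards [Ioo_mem_nhdsGT_of_mem (mem_Ico.mpr ⟨le_refl (0:ℝ), hr.1⟩)] with t ht
      exact hφanti ⟨ht.1, lt_trans ht.2 hr.2⟩ hr ht.2.le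
    have : kappaFun w r + δ/16 * r ^ 2 ≤ w₀' := hφle
    linarith
  -- the constant G and C
  set A := Real.sqrt (16 * w₀' / (3 * δ)) with hAdef
  set G := δ * A ^ 3 / 8 with hGdef
  have hA2 : A ^ 2 = 16 * w₀' / (3 * δ) := Real.sq_sqrt (by positivity)
  have hGsq : G ^ 2 = 64 * w₀' ^ 3 / (27 * δ) := by
    have h1 : G ^ 2 = δ ^ 2 * (A ^ 2) ^ 3 / 64 := by rw [hGdef]; ring
    rw [h1, hA2]
    field_simp
    ring
  have hG0 : 0 ≤ G := by positivity
  set ξ := 1 - 64 * w₀' ^ 3 / (27 * δ) with hξdef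
  have hξpos : 0 < ξ := by
    rw [hξdef]
    have h1 : 64 * w₀' ^ 3 / (27 * δ) < 1 := (div_lt_one (by positivity)).mpr hxi
    linarith
  have hξG : ξ = 1 - G ^ 2 := by rw [hξdef, hGsq]
  set C := (Real.sqrt ξ)⁻¹ with hCdef
  have hC0 : 0 ≤ C := by positivity
  have hCrpow : ξ ^ (-(1 : ℝ) / 2) = C := by
    rw [hCdef, show (-(1:ℝ)/2) = -(1/2:ℝ) by norm_num, Real.rpow_neg hξpos.le,
      ← Real.sqrt_eq_rpow]
  -- pointwise bound on w
  have hwle : ∀ r ∈ Ioo 0 r₀, w r ≤ C * (w₀' * r - δ * r ^ 3 / 16) := by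
    intro r hr
    have hκ := hxpos r hr
    have hxb := hxbound r hr
    have hrpos := hr.1
    have hrne : r ≠ 0 := ne_of_gt hrpos
    have hs : (0:ℝ) < 1 + w r ^ 2 := by positivity
    set q := Real.sqrt (1 + w r ^ 2) with hqdef
    have hq0 : 0 < q := Real.sqrt_pos.mpr hs
    have hq2 : q ^ 2 = 1 + w r ^ 2 := Real.sq_sqrt hs.le
    have hrx_eq : r * kappaFun w r = w r / q := by
      rw [kappaFun]
      field_simp
      rw [← hqdef]
    have hrx_pos : 0 < r * kappaFun w r := mul_pos hrpos hκ
    have hg : r * kappaFun w r ≤ w₀' * r - δ * r ^ 3 / 16 := by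
      nlinarith [mul_le_mul_of_nonneg_left hxb hrpos.le]
    have hgG : w₀' * r - δ * r ^ 3 / 16 ≤ G := by
      have hA0 : 0 ≤ A := Real.sqrt_nonneg _
      have hw₀eq : w₀' = 3 * δ * A ^ 2 / 16 := by
        rw [hA2]; field_simp
      have hid : G - (w₀' * r - δ * r ^ 3 / 16) = δ / 16 * ((r - A) ^ 2 * (r + 2 * A)) := by
        rw [hGdef, hw₀eq]; ring
      have h2 : 0 ≤ δ / 16 * ((r - A) ^ 2 * (r + 2 * A)) :=
        mul_nonneg (by positivity) (mul_nonneg (sq_nonneg _) (by linarith))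
      linarith
    have hrxG : r * kappaFun w r ≤ G := le_trans hg hgG
    have hsle : (1 + w r ^ 2) * ξ ≤ 1 := by
      have h1 : (r * kappaFun w r) ^ 2 ≤ G ^ 2 := by nlinarith
      have h2 : (r * kappaFun w r) ^ 2 = w r ^ 2 / (1 + w r ^ 2) := by
        rw [hrx_eq, div_pow, hq2]
      have h3 : w r ^ 2 ≤ G ^ 2 * (1 + w r ^ 2) := by
        rw [h2] at h1
        exact (div_le_iff₀ hs).mp h1
      rw [hξG]
      nlinarith
    have hqC : q ≤ C := by
      have h4 : (q * Real.sqrt ξ) ^ 2 ≤ 1 := by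
        rw [mul_pow, hq2, Real.sq_sqrt hξpos.le]
        exact hsle
      have h5 : q * Real.sqrt ξ ≤ 1 := by
        nlinarith [sq_nonneg (q * Real.sqrt ξ - 1), mul_nonneg hq0.le (Real.sqrt_nonneg ξ)]
      rw [hCdef, inv_eq_one_div, le_div_iff₀ (Real.sqrt_pos.mpr hξpos)]
      exact h5
    have hw_eq : w r = (r * kappaFun w r) * q := by
      rw [hrx_eq, div_mul_cancel₀ _ (ne_of_gt hq0)]
    calc w r = (r * kappaFun w r) * q := hw_eq
      _ ≤ (w₀' * r - δ * r ^ 3 / 16) * C :=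
        mul_le_mul hg hqC hq0.le (le_trans hrx_pos.le hg)
      _ = C * (w₀' * r - δ * r ^ 3 / 16) := mul_comm _ _
  -- integrability
  have hgcont : Continuous (fun r : ℝ => C * (w₀' * r - δ * r ^ 3 / 16)) := by continuity
  have hgint : IntegrableOn (fun r => C * (w₀' * r - δ * r ^ 3 / 16)) (Ioo 0 r₀) volume :=
    (hgcont.integrableOn_Icc).mono_set Ioo_subset_Icc_self
  have hwcontOn : ContinuousOn w (Ioo 0 r₀) := fun r hr =>
    ((hdw r (hIocU (Ioo_subset_Ioc_self hr))).continuousAt).continuousWithinAt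
  have hwint : IntegrableOn w (Ioo 0 r₀) volume := by
    apply Integrable.mono' hgint (hwcontOn.aestronglyMeasurable measurableSet_Ioo)
    rw [ae_restrict_iff' measurableSet_Ioo]
    refine ae_of_all _ (fun r hr => ?_)
    rw [Real.norm_eq_abs, abs_of_pos (hwpos r hr)]
    exact hwle r hr
  -- integral computation
  have h1 : ∫ r in (0:ℝ)..r₀, w r = ∫ r in Ioo 0 r₀, w r := by
    rw [intervalIntegral.integral_of_le hr₀pos.le, MeasureTheory.integral_Ioc_eq_integral_Ioo]
  have h2 : ∫ r in Ioo 0 r₀, w r ≤ ∫ r in Ioo 0 r₀, C * (w₀' * r - δ * r ^ 3 / 16) :=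
    setIntegral_mono_on hwint hgint measurableSet_Ioo (fun r hr => hwle r hr)
  have h3 : ∫ r in Ioo 0 r₀, C * (w₀' * r - δ * r ^ 3 / 16)
      = C * (w₀' * r₀ ^ 2 / 2 - δ * r₀ ^ 4 / 64) := by
    rw [← MeasureTheory.integral_Ioc_eq_integral_Ioo, ← intervalIntegral.integral_of_le hr₀pos.le]
    have i1 : IntervalIntegrable (fun r => w₀' * r) volume 0 r₀ :=
      (continuous_const.mul continuous_id).intervalIntegrable _ _
    have i2 : IntervalIntegrable (fun r => δ * r ^ 3 / 16) volume 0 r₀ :=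
      ((continuous_const.mul (continuous_pow 3)).div_const 16).intervalIntegrable _ _
    rw [intervalIntegral.integral_const_mul, intervalIntegral.integral_sub i1 i2,
      intervalIntegral.integral_const_mul, intervalIntegral.integral_div,
      intervalIntegral.integral_const_mul, integral_pow,
      integral_id]
    norm_num
    all_goals exact Or.inl (by ring)
  have h4 : C * (w₀' * r₀ ^ 2 / 2 - δ * r₀ ^ 4 / 64) ≤ 4 * w₀' ^ 2 / δ * C := by
    have hkey : w₀' * r₀ ^ 2 / 2 - δ * r₀ ^ 4 / 64 ≤ 4 * w₀' ^ 2 / δ := by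
      have hid : 4 * w₀' ^ 2 / δ - (w₀' * r₀ ^ 2 / 2 - δ * r₀ ^ 4 / 64)
          = (δ * r₀ ^ 2 - 16 * w₀') ^ 2 / (64 * δ) := by
        field_simp
        ring
      nlinarith [div_nonneg (sq_nonneg (δ * r₀ ^ 2 - 16 * w₀')) (by positivity : (0:ℝ) ≤ 64 * δ)]
    calc C * (w₀' * r₀ ^ 2 / 2 - δ * r₀ ^ 4 / 64) ≤ C * (4 * w₀' ^ 2 / δ) :=
          mul_le_mul_of_nonneg_left hkey hC0
      _ = 4 * w₀' ^ 2 / δ * C := mul_comm _ _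
  rw [h1, hCrpow]
  calc ∫ r in Ioo 0 r₀, w r ≤ C * (w₀' * r₀ ^ 2 / 2 - δ * r₀ ^ 4 / 64) := by rw [← h3]; exact h2
    _ ≤ 4 * w₀' ^ 2 / δ * C := h4


/-- Under the conditions of Lemma `thm-pos` and `64·w₀'³ < 27·δ₊(w₀')`, the
area of the positive part satisfies
`∫₀^{r₀} w ≤ (4·w₀'²/δ₊)·(1 − 64·w₀'³/(27·δ₊))^{−1/2}`. -/
theorem stmt3 (c₀ lam p w₀' : ℝ) (hp : 0 < p)
    (hroots : ∀ t : ℝ, Qpoly c₀ lam p t = 0 → 0 < t)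
    (hw₀ : 0 < w₀')
    (hQneg : ∀ t ∈ Set.Icc (0 : ℝ) w₀', Qpoly c₀ lam p t < 0)
    (hxi : 64 * w₀' ^ 3 < 27 * deltaPlus c₀ lam p w₀')
    (rstar : EReal) (w : ℝ → ℝ)
    (hsol : IsProfileSolution c₀ lam p w₀' rstar w)
    (r₀ : ℝ) (hr₀ : IsFirstZero rstar w r₀) :
    ∫ r in (0 : ℝ)..r₀, w r ≤
      (4 * w₀' ^ 2 / deltaPlus c₀ lam p w₀') *
        (1 - 64 * w₀' ^ 3 / (27 * deltaPlus c₀ lam p w₀')) ^ (-(1 : ℝ) / 2) :=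
  stmt3' c₀ lam p w₀' hp hw₀ hQneg hxi rstar w hsol r₀ hr₀
end

section
/- Suppose every real root of Q is positive, w₀' > 0, and Q(t) < 0 for all t ∈ [0, w₀']. Let w be a maximal profile solution with initial slope w₀' on (0, r_∞), with first zero r₀. Then for all r ∈ (r₀, r_∞): r·|w'(r)|/(1 + w(r)²)^{5/4} ≥ r₀·|w'(r₀)|; in particular r·|w'(r)| ≥ r₀·|w'(r₀)| > 0. -/
open Real Set Filter MeasureTheory Topology

lemma Qpoly_neg_of_nonpos (c₀ lam p : ℝ) (hp : 0 < p)
    (hroots : ∀ t : ℝ, Qpoly c₀ lam p t = 0 → 0 < t) :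
    ∀ t : ℝ, t ≤ 0 → Qpoly c₀ lam p t < 0 := by
  intro t ht
  by_contra h
  push_neg at h
  have hQ0 : Qpoly c₀ lam p 0 < 0 := by simp [Qpoly]; linarith
  have hcont : ContinuousOn (Qpoly c₀ lam p) (Set.Icc t 0) := by
    unfold Qpoly; fun_prop
  obtain ⟨s, hs, hQs⟩ := intermediate_value_Icc' ht hcont ⟨hQ0.le, h⟩
  exact absurd (hroots s hQs) (not_lt.2 hs.2)

noncomputable def Faux (w : ℝ → ℝ) (s : ℝ) : ℝ :=
  s * deriv w s * (1 + w s ^ 2) ^ (-((5:ℝ)/4))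

/-- For a maximal profile solution past its first zero,
`r·|w'(r)|/(1 + w(r)²)^{5/4} ≥ r₀·|w'(r₀)|`; in particular
`r·|w'(r)| ≥ r₀·|w'(r₀)| > 0`. -/
theorem stmt11 (c₀ lam p w₀' : ℝ) (hp : 0 < p)
    (hroots : ∀ t : ℝ, Qpoly c₀ lam p t = 0 → 0 < t)
    (hw₀ : 0 < w₀')
    (hQneg : ∀ t ∈ Set.Icc (0 : ℝ) w₀', Qpoly c₀ lam p t < 0)
    (rstar : EReal) (w : ℝ → ℝ)
    (hsol : IsMaximal c₀ lam p w₀' rstar w)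
    (r₀ : ℝ) (hr₀ : IsFirstZero rstar w r₀) :
    ∀ r : ℝ, r₀ < r → (r : EReal) < rstar →
      r₀ * |deriv w r₀| ≤ r * |deriv w r| / (1 + (w r) ^ 2) ^ ((5 : ℝ) / 4) ∧
      r₀ * |deriv w r₀| ≤ r * |deriv w r| ∧
      0 < r₀ * |deriv w r₀| := by
  obtain ⟨hr₀pos, hr₀lt, hwpos, hwzero⟩ := hr₀
  obtain ⟨hps, -⟩ := hsol
  have hS : IsOpen (profDom rstar) := by
    have h1 : profDom rstar =
        Set.Ioi 0 ∩ ((fun r : ℝ => (r : EReal)) ⁻¹' Set.Iio rstar) := rfl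
    rw [h1]
    exact isOpen_Ioi.inter (isOpen_Iio.preimage continuous_coe_real_ereal)
  have hr₀S : r₀ ∈ profDom rstar := ⟨hr₀pos, hr₀lt⟩
  have hcd := hps.smooth
  have hd1 : ∀ x ∈ profDom rstar, HasDerivAt w (deriv w x) x := by
    intro x hx
    have hdiff : DifferentiableOn ℝ w (profDom rstar) := hcd.differentiableOn (by norm_num)
    exact ((hdiff x hx).differentiableAt (hS.mem_nhds hx)).hasDerivAt
  have hcd1 : ContDiffOn ℝ 1 (deriv w) (profDom rstar) := hcd.deriv_of_isOpen hS (by norm_num)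
  have hd2 : ∀ x ∈ profDom rstar, HasDerivAt (deriv w) (deriv (deriv w) x) x := by
    intro x hx
    have hdiff : DifferentiableOn ℝ (deriv w) (profDom rstar) := hcd1.differentiableOn (by norm_num)
    exact ((hdiff x hx).differentiableAt (hS.mem_nhds hx)).hasDerivAt
  have hwcont : ContinuousOn w (profDom rstar) := hcd.continuousOn
  have hw'cont : ContinuousOn (deriv w) (profDom rstar) := hcd1.continuousOn
  have hQneg' : ∀ t : ℝ, t ≤ 0 → Qpoly c₀ lam p t < 0 := Qpoly_neg_of_nonpos c₀ lam p hp hroots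
  have hsub : ∀ {a b : ℝ}, 0 < a → (b : EReal) < rstar → Set.Icc a b ⊆ profDom rstar := by
    intro a b ha hb x hx
    exact ⟨lt_of_lt_of_le ha hx.1, lt_of_le_of_lt (EReal.coe_le_coe_iff.2 hx.2) hb⟩
  have hvpos : ∀ s : ℝ, (0:ℝ) < 1 + w s ^ 2 := fun s => by positivity
  -- the derivative of Faux
  have hF' : ∀ x ∈ profDom rstar, HasDerivAt (Faux w)
      ((1 + w x ^ 2) ^ (-((5:ℝ)/4)) *
        (w x * (1 + w x ^ 2) / x +
          x ^ 2 / 2 * (1 + w x ^ 2) ^ ((5:ℝ)/2) * Qpoly c₀ lam p (kappaFun w x))) x := by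
    intro x hx
    have hxpos := hx.1
    have hu := hd1 x hx
    have hu2 := hd2 x hx
    have hv : HasDerivAt (fun s => 1 + w s ^ 2) (2 * w x * deriv w x) x := by
      have h := (hasDerivAt_const x (1:ℝ)).add (hu.pow 2)
      exact h.congr_deriv (by norm_num <;> ring)
    have hrpow : HasDerivAt (fun s => (1 + w s ^ 2) ^ (-((5:ℝ)/4)))
        ((2 * w x * deriv w x) * (-((5:ℝ)/4)) * (1 + w x ^ 2) ^ (-((5:ℝ)/4) - 1)) x :=
      hv.rpow_const (Or.inl (ne_of_gt (hvpos x)))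
    have hprod : HasDerivAt (fun s => s * deriv w s)
        (1 * deriv w x + x * deriv (deriv w) x) x := (hasDerivAt_id x).mul hu2
    have hFd := hprod.mul hrpow
    have hgoal : HasDerivAt (fun s => (s * deriv w s) * (1 + w s ^ 2) ^ (-((5:ℝ)/4)))
        ((1 * deriv w x + x * deriv (deriv w) x) * (1 + w x ^ 2) ^ (-((5:ℝ)/4)) +
          (x * deriv w x) * ((2 * w x * deriv w x) * (-((5:ℝ)/4)) *
            (1 + w x ^ 2) ^ (-((5:ℝ)/4) - 1))) x := hFd
    unfold Faux
    convert hgoal using 1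
    rw [hps.ode x hx]
    have hvne : (1 + w x ^ 2) ≠ 0 := ne_of_gt (hvpos x)
    have hxne : x ≠ 0 := ne_of_gt hxpos
    have hpow1 : (1 + w x ^ 2) ^ (-((5:ℝ)/4) - 1)
        = (1 + w x ^ 2) ^ (-((5:ℝ)/4)) / (1 + w x ^ 2) := by
      rw [Real.rpow_sub (hvpos x), Real.rpow_one]
    rw [hpow1]
    field_simp
    ring
  -- sign of the derivative where w ≤ 0
  have hF'le : ∀ x ∈ profDom rstar, w x ≤ 0 →
      (1 + w x ^ 2) ^ (-((5:ℝ)/4)) *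
        (w x * (1 + w x ^ 2) / x +
          x ^ 2 / 2 * (1 + w x ^ 2) ^ ((5:ℝ)/2) * Qpoly c₀ lam p (kappaFun w x)) ≤ 0 := by
    intro x hx hwx
    have hxpos := hx.1
    have hA : (0:ℝ) < (1 + w x ^ 2) ^ (-((5:ℝ)/4)) := Real.rpow_pos_of_pos (hvpos x) _
    have hB : (0:ℝ) < (1 + w x ^ 2) ^ ((5:ℝ)/2) := Real.rpow_pos_of_pos (hvpos x) _
    have hκ : kappaFun w x ≤ 0 := by
      unfold kappaFun
      apply div_nonpos_of_nonpos_of_nonneg hwx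
      positivity
    have hQ := hQneg' _ hκ
    have h1 : w x * (1 + w x ^ 2) / x ≤ 0 :=
      div_nonpos_of_nonpos_of_nonneg
        (mul_nonpos_of_nonpos_of_nonneg hwx (hvpos x).le) hxpos.le
    have h2 : x ^ 2 / 2 * (1 + w x ^ 2) ^ ((5:ℝ)/2) * Qpoly c₀ lam p (kappaFun w x) ≤ 0 :=
      mul_nonpos_of_nonneg_of_nonpos (by positivity) hQ.le
    exact mul_nonpos_of_nonneg_of_nonpos hA.le (by linarith)
  -- antitone
  have hAnti : ∀ {b : ℝ}, r₀ ≤ b → (b : EReal) < rstar → (∀ s ∈ Set.Ico r₀ b, w s ≤ 0) →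
      AntitoneOn (Faux w) (Set.Icc r₀ b) := by
    intro b hb hblt hwle
    have hIccS : Set.Icc r₀ b ⊆ profDom rstar := hsub hr₀pos hblt
    apply antitoneOn_of_deriv_nonpos (convex_Icc r₀ b)
    · unfold Faux
      apply ContinuousOn.mul
      · exact (continuous_id.continuousOn).mul (hw'cont.mono hIccS)
      · exact (continuousOn_const.add ((hwcont.mono hIccS).pow 2)).rpow_const
          (fun x _ => Or.inl (ne_of_gt (hvpos x)))
    · intro x hx
      rw [interior_Icc] at hx
      have hxS : x ∈ profDom rstar := hIccS ⟨hx.1.le, hx.2.le⟩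
      exact (hF' x hxS).differentiableAt.differentiableWithinAt
    · intro x hx
      rw [interior_Icc] at hx
      have hxS : x ∈ profDom rstar := hIccS ⟨hx.1.le, hx.2.le⟩
      rw [(hF' x hxS).deriv]
      exact hF'le x hxS (hwle x ⟨hx.1.le, hx.2⟩)
  -- deriv w r₀ < 0
  have hu₀le : deriv w r₀ ≤ 0 := by
    have hslope := (hasDerivAt_iff_tendsto_slope.1 (hd1 r₀ hr₀S)).mono_left
      (nhdsWithin_mono _ (fun s hs => ne_of_lt hs) : 𝓝[<] r₀ ≤ 𝓝[≠] r₀)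
    refine le_of_tendsto hslope ?_
    filter_upwards [Ioo_mem_nhdsLT_of_mem (Set.mem_Ioc.2 ⟨hr₀pos, le_refl r₀⟩)] with s hs
    rw [slope_def_field, hwzero, sub_zero]
    exact (div_neg_of_pos_of_neg (hwpos s hs) (by linarith [hs.2])).le
  have hu₀ : deriv w r₀ < 0 := by
    rcases lt_or_eq_of_le hu₀le with h | h
    · exact h
    exfalso
    have h0 : deriv w r₀ = 0 := h
    have hw2' : deriv (deriv w) r₀ < 0 := by
      rw [hps.ode r₀ hr₀S, hwzero, h0]
      have hκ0 : kappaFun w r₀ = 0 := by unfold kappaFun; rw [hwzero]; simp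
      rw [hκ0]
      have hQ0 : Qpoly c₀ lam p 0 = -(p/2) := by unfold Qpoly; ring
      rw [hQ0]
      norm_num [Real.one_rpow]
      positivity
    have hslope := (hasDerivAt_iff_tendsto_slope.1 (hd2 r₀ hr₀S)).mono_left
      (nhdsWithin_mono _ (fun s hs => ne_of_lt hs) : 𝓝[<] r₀ ≤ 𝓝[≠] r₀)
    have hev : ∀ᶠ s in 𝓝[<] r₀, s ∈ Set.Ioo 0 r₀ ∧ 0 < deriv w s := by
      filter_upwards [hslope.eventually_lt_const hw2',
        Ioo_mem_nhdsLT_of_mem (Set.mem_Ioc.2 ⟨hr₀pos, le_refl r₀⟩)] with s hs hs2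
      refine ⟨hs2, ?_⟩
      rw [slope_def_field, h0, sub_zero] at hs
      by_contra hc
      push_neg at hc
      have h3 : 0 ≤ deriv w s / (s - r₀) :=
        div_nonneg_of_nonpos hc (by linarith [hs2.2])
      linarith
    obtain ⟨a, ha, hIoo⟩ := mem_nhdsLT_iff_exists_Ioo_subset.1 hev
    set m := (max a 0 + r₀) / 2 with hm
    have hmax : max a 0 < r₀ := max_lt ha hr₀pos
    have hma : a < m := by
      have := le_max_left a 0
      simp only [hm]; linarith
    have hmpos : 0 < m := by
      have := le_max_right a 0
      simp only [hm]; linarith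
    have hmlt : m < r₀ := by
      simp only [hm]; linarith
    have hmono : StrictMonoOn w (Set.Icc m r₀) := by
      apply strictMonoOn_of_deriv_pos (convex_Icc m r₀)
      · refine hwcont.mono (hsub hmpos hr₀lt)
      · intro x hx
        rw [interior_Icc] at hx
        exact (hIoo ⟨lt_of_lt_of_le hma hx.1.le, hx.2⟩).2
    have hwm : w m < w r₀ :=
      hmono (Set.left_mem_Icc.2 hmlt.le) (Set.right_mem_Icc.2 hmlt.le) hmlt
    rw [hwzero] at hwm
    exact absurd (hwpos m ⟨hmpos, hmlt⟩) (by linarith)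
  -- negativity just after a zero with negative slope
  have hneg_after : ∀ x ∈ profDom rstar, w x = 0 → deriv w x < 0 →
      ∀ᶠ s in 𝓝[>] x, w s < 0 := by
    intro x hx hwx hux
    have hslope := (hasDerivAt_iff_tendsto_slope.1 (hd1 x hx)).mono_left
      (nhdsWithin_mono _ (fun s hs => ne_of_gt hs) : 𝓝[>] x ≤ 𝓝[≠] x)
    filter_upwards [hslope.eventually_lt_const hux, self_mem_nhdsWithin] with s hs hs2
    rw [slope_def_field, hwx, sub_zero] at hs
    have hsx : 0 < s - x := sub_pos.2 hs2
    by_contra hc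
    push_neg at hc
    exact absurd (div_nonneg hc hsx.le) (not_le.2 hs)
  -- MAIN
  intro r hrr hrlt
  have hrpos : 0 < r := lt_trans hr₀pos hrr
  have hrS : r ∈ profDom rstar := ⟨hrpos, hrlt⟩
  have hwle : ∀ s ∈ Set.Icc r₀ r, w s ≤ 0 := by
    by_contra hc
    push_neg at hc
    obtain ⟨s₀, hs₀, hws₀⟩ := hc
    set T := {s : ℝ | s ∈ Set.Icc r₀ r ∧ 0 < w s} with hT
    have hTne : T.Nonempty := ⟨s₀, hs₀, hws₀⟩
    have hTbdd : BddBelow T := ⟨r₀, fun s hs => hs.1.1⟩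
    set x := sInf T with hx
    have hxle : x ≤ r := le_trans (csInf_le hTbdd ⟨hs₀, hws₀⟩) hs₀.2
    have hxge : r₀ ≤ x := le_csInf hTne fun s hs => hs.1.1
    have hxS : x ∈ profDom rstar :=
      ⟨lt_of_lt_of_le hr₀pos hxge, lt_of_le_of_lt (EReal.coe_le_coe_iff.2 hxle) hrlt⟩
    have hbefore : ∀ s ∈ Set.Ico r₀ x, w s ≤ 0 := by
      intro s hs
      by_contra hcs
      push_neg at hcs
      have hmem : s ∈ T := ⟨⟨hs.1, le_trans hs.2.le hxle⟩, hcs⟩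
      exact absurd (csInf_le hTbdd hmem) (not_le.2 hs.2)
    have hwx0 : w x = 0 := by
      have hcontx : ContinuousAt w x := (hwcont x hxS).continuousAt (hS.mem_nhds hxS)
      have hge : 0 ≤ w x := by
        have hcl : x ∈ closure T := csInf_mem_closure hTne hTbdd
        haveI hne : (𝓝[T] x).NeBot := mem_closure_iff_nhdsWithin_neBot.1 hcl
        have htd : Tendsto w (𝓝[T] x) (𝓝 (w x)) :=
          hcontx.tendsto.mono_left nhdsWithin_le_nhds
        refine ge_of_tendsto htd ?_
        filter_upwards [eventually_mem_nhdsWithin] with s hs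
        exact hs.2.le
      have hle : w x ≤ 0 := by
        rcases eq_or_lt_of_le hxge with heq | hlt
        · rw [← heq, hwzero]
        · have htd : Tendsto w (𝓝[<] x) (𝓝 (w x)) :=
            hcontx.tendsto.mono_left nhdsWithin_le_nhds
          refine le_of_tendsto htd ?_
          filter_upwards [Ioo_mem_nhdsLT_of_mem (Set.mem_Ioc.2 ⟨hlt, le_refl x⟩)] with s hs
          exact hbefore s ⟨hs.1.le, hs.2⟩
      linarith
    have hux : deriv w x < 0 := by
      have hFle : Faux w x ≤ Faux w r₀ :=
        hAnti hxge (lt_of_le_of_lt (EReal.coe_le_coe_iff.2 hxle) hrlt) hbefore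
          (Set.left_mem_Icc.2 hxge) (Set.right_mem_Icc.2 hxge) hxge
      have hFr₀ : Faux w r₀ = r₀ * deriv w r₀ := by
        unfold Faux; rw [hwzero]; norm_num
      have hFx : Faux w x = x * deriv w x := by
        unfold Faux; rw [hwx0]; norm_num
      rw [hFr₀, hFx] at hFle
      have hlt0 : x * deriv w x < 0 :=
        lt_of_le_of_lt hFle (mul_neg_of_pos_of_neg hr₀pos hu₀)
      by_contra hcc
      push_neg at hcc
      nlinarith [hxS.1]
    obtain ⟨u, hu, hIoo⟩ := mem_nhdsGT_iff_exists_Ioo_subset.1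
      (hneg_after x hxS hwx0 hux)
    obtain ⟨s, hsT, hslt⟩ := (csInf_lt_iff hTbdd hTne).1 hu
    have hxs : x ≤ s := csInf_le hTbdd hsT
    have hxs' : x < s := by
      rcases lt_or_eq_of_le hxs with h | h
      · exact h
      · exfalso; rw [← h] at hsT; exact absurd hwx0 (ne_of_gt hsT.2)
    have hws : w s < 0 := hIoo ⟨hxs', hslt⟩
    linarith [hsT.2]
  -- conclusion
  have hFle : Faux w r ≤ Faux w r₀ :=
    hAnti hrr.le hrlt (fun s hs => hwle s ⟨hs.1, hs.2.le⟩)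
      (Set.left_mem_Icc.2 hrr.le) (Set.right_mem_Icc.2 hrr.le) hrr.le
  have hFr₀ : Faux w r₀ = r₀ * deriv w r₀ := by
    unfold Faux; rw [hwzero]; norm_num
  have hv1 : (1:ℝ) ≤ 1 + w r ^ 2 := by nlinarith [sq_nonneg (w r)]
  have hP : (1:ℝ) ≤ (1 + w r ^ 2) ^ ((5:ℝ)/4) := by
    calc (1:ℝ) = 1 ^ ((5:ℝ)/4) := (Real.one_rpow _).symm
    _ ≤ (1 + w r ^ 2) ^ ((5:ℝ)/4) := Real.rpow_le_rpow zero_le_one hv1 (by norm_num)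
  have hPpos : (0:ℝ) < (1 + w r ^ 2) ^ ((5:ℝ)/4) := lt_of_lt_of_le one_pos hP
  have hFr : Faux w r = r * deriv w r / (1 + w r ^ 2) ^ ((5:ℝ)/4) := by
    unfold Faux
    rw [Real.rpow_neg (hvpos r).le]; ring
  rw [hFr₀, hFr] at hFle
  have hru : r * deriv w r / (1 + w r ^ 2) ^ ((5:ℝ)/4) < 0 :=
    lt_of_le_of_lt hFle (mul_neg_of_pos_of_neg hr₀pos hu₀)
  have huneg : deriv w r < 0 := by
    by_contra hcc
    push_neg at hcc
    have : (0:ℝ) ≤ r * deriv w r / (1 + w r ^ 2) ^ ((5:ℝ)/4) := by positivity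
    linarith
  have habs : |deriv w r| = -(deriv w r) := abs_of_neg huneg
  have habs₀ : |deriv w r₀| = -(deriv w r₀) := abs_of_neg hu₀
  have hgoal1 : r₀ * |deriv w r₀| ≤ r * |deriv w r| / (1 + w r ^ 2) ^ ((5:ℝ)/4) := by
    rw [habs, habs₀]
    have heq : r * -(deriv w r) / (1 + w r ^ 2) ^ ((5:ℝ)/4)
        = -(r * deriv w r / (1 + w r ^ 2) ^ ((5:ℝ)/4)) := by ring
    rw [heq]
    linarith
  refine ⟨hgoal1, ?_, ?_⟩
  · calc r₀ * |deriv w r₀| ≤ r * |deriv w r| / (1 + w r ^ 2) ^ ((5:ℝ)/4) := hgoal1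
    _ ≤ r * |deriv w r| := div_le_self (by positivity) hP
  · exact mul_pos hr₀pos (abs_pos.2 (ne_of_lt hu₀))
end
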